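/- arXiv:math/0610528 — 8 statements merged into one kernel-verified Lean document; each statement's English description precedes it below -/
import Mathlib

section
/- Let A be a semi-Montel topological algebra (i.e., A is Hausdorff and every von Neumann bounded subset of A is relatively compact) that has a right bounded approximate identity. Then A has a right identity: there exists e ∈ A such that a·e = a for all a ∈ A. -/
open Filter Topology Bornology Set Pointwise

universe u

/-! A bounded approximate identity has relatively compact range in a semi-Montel algebra, so it
has a cluster point `c`. Continuity of `b ↦ a * b` makes `a * c` a cluster point of `a * eᵢ`,
which converges to `a`; in a Hausdorff space this forces `a * c = a`. -/

theorem MapClusterPt.eq_of_tendsto {ι X : Type*} [TopologicalSpace X] [T2Space X]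
    {F : Filter ι} {u : ι → X} {x y : X} (hx : MapClusterPt x F u) (hy : Tendsto u F (𝓝 y)) :
    x = y :=
  eq_of_nhds_neBot (hx.neBot.mono (inf_le_inf_left _ hy))

theorem exists_mul_eq_self_of_isCompact_closure_range {ι A : Type*} [Mul A] [TopologicalSpace A]
    [T2Space A] (hmul_left : ∀ a : A, Continuous fun b : A => a * b) {l : Filter ι} [l.NeBot]
    {e : ι → A} (hcomp : IsCompact (closure (range e)))
    (he : ∀ a : A, Tendsto (fun i => a * e i) l (𝓝 a)) :
    ∃ c : A, ∀ a : A, a * c = a := by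
  obtain ⟨c, -, hc⟩ := hcomp.exists_mapClusterPt (f := l)
    (tendsto_principal.2 (Eventually.of_forall fun i => subset_closure (mem_range_self i)))
  exact ⟨c, fun a => (hc.continuousAt_comp (hmul_left a).continuousAt).eq_of_tendsto (he a)⟩

theorem stmt_1_general {A : Type u} [NonUnitalRing A] [Module ℂ A] [TopologicalSpace A]
    [T2Space A]
    (hmul_left : ∀ a : A, Continuous fun b : A => a * b)
    (hMontel : ∀ s : Set A, IsVonNBounded ℂ s → IsCompact (closure s))
    (hbai : ∃ (ι : Type u) (_ : Preorder ι) (_ : IsDirected ι (· ≤ ·)) (_ : Nonempty ι)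
      (e : ι → A), IsVonNBounded ℂ (Set.range e) ∧
        ∀ a : A, Tendsto (fun i => a * e i) atTop (𝓝 a)) :
    ∃ e : A, ∀ a : A, a * e = a := by
  obtain ⟨ι, _, _, _, e, hbounded, happrox⟩ := hbai
  exact exists_mul_eq_self_of_isCompact_closure_range hmul_left (hMontel _ hbounded) happrox

/-- A semi-Montel topological algebra with a right bounded approximate
identity has a right identity. -/
theorem stmt_1 {A : Type u} [NonUnitalRing A] [Module ℂ A] [TopologicalSpace A]
    [IsTopologicalAddGroup A] [ContinuousSMul ℂ A] [T2Space A]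
    (hmul_left : ∀ a : A, Continuous fun b : A => a * b)
    (hmul_right : ∀ b : A, Continuous fun a : A => a * b)
    (hMontel : ∀ s : Set A, IsVonNBounded ℂ s → IsCompact (closure s))
    (hbai : ∃ (ι : Type u) (_ : Preorder ι) (_ : IsDirected ι (· ≤ ·)) (_ : Nonempty ι)
      (e : ι → A), IsVonNBounded ℂ (Set.range e) ∧
        ∀ a : A, Tendsto (fun i => a * e i) atTop (𝓝 a)) :
    ∃ e : A, ∀ a : A, a * e = a :=
  stmt_1_general hmul_left hMontel hbai
end

section
/- Let φ : A → B be a continuous algebra homomorphism between topological algebras such that φ has dense range and the multiplication in B is jointly continuous. If A has a right locally bounded approximate identity, then B has a right locally bounded approximate identity. -/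
/-! Pulling a `0`-neighbourhood of `B` back along `φ` gives approximate identities `φ b` for
finite subsets of the dense range. For arbitrary `a`, choose `φ a'` close to `a` and split
`a - a * φ b = (a - φ a') + (φ a' - φ a' * φ b) - (a - φ a') * φ b`. Since `φ b` lies in the
fixed set `C • V`, joint continuity of the product makes the last term small once the error
`a - φ a'` is small relative to `C`, and `C` does not depend on the finite set. -/

open Filter Topology Set Pointwise

universe u

def HasRightLocallyBoundedApproxIdentity (R : Type*) [NonUnitalRing R] [Module ℂ R]
    [TopologicalSpace R] : Prop :=
  ∀ U ∈ 𝓝 (0 : R), ∃ C : ℝ, 0 < C ∧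
    ∀ F : Finset R, ∃ b ∈ (C : ℂ) • U, ∀ a ∈ F, a - a * b ∈ U

def HasRightLocallyBoundedApproxIdentityOn {R : Type*} [NonUnitalRing R] [Module ℂ R]
    [TopologicalSpace R] (S : Set R) : Prop :=
  ∀ U ∈ 𝓝 (0 : R), ∃ C : ℝ, 0 < C ∧
    ∀ F : Finset R, ↑F ⊆ S → ∃ b ∈ (C : ℂ) • U, ∀ a ∈ F, a - a * b ∈ U

theorem HasRightLocallyBoundedApproxIdentity.on_range {A B : Type*}
    [NonUnitalRing A] [Module ℂ A] [TopologicalSpace A]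
    [NonUnitalRing B] [Module ℂ B] [TopologicalSpace B]
    (hA : HasRightLocallyBoundedApproxIdentity A) (φ : A →ₙₐ[ℂ] B) (hφ : Continuous φ) :
    HasRightLocallyBoundedApproxIdentityOn (range φ) := by
  classical
  intro U hU
  have hφU : φ ⁻¹' U ∈ 𝓝 (0 : A) := hφ.continuousAt.preimage_mem_nhds (by rwa [map_zero])
  obtain ⟨C, hC, hCU⟩ := hA _ hφU
  refine ⟨C, hC, fun F hF => ?_⟩
  rw [← image_univ, Finset.subset_set_image_iff] at hF
  obtain ⟨F', -, rfl⟩ := hF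
  obtain ⟨_, ⟨x, hx, rfl⟩, hx'⟩ := hCU F'
  refine ⟨φ ((C : ℂ) • x), by rw [map_smul]; exact smul_mem_smul_set hx,
    Finset.forall_mem_image.mpr fun a ha => ?_⟩
  simpa only [mem_preimage, map_sub, map_mul] using hx' a ha

theorem exists_nhds_zero_mul_mem {R : Type*} [MulZeroClass R] [TopologicalSpace R]
    [ContinuousMul R] {W : Set R} (hW : W ∈ 𝓝 (0 : R)) :
    ∃ P ∈ 𝓝 (0 : R), ∀ p ∈ P, ∀ q ∈ P, p * q ∈ W := by
  have : (fun x : R × R => x.1 * x.2) ⁻¹' W ∈ 𝓝 ((0 : R), (0 : R)) :=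
    tendsto_mul (by rwa [mul_zero])
  obtain ⟨P, hPo, hP0, hPW⟩ := exists_nhds_square this
  exact ⟨P, hPo.mem_nhds hP0, fun p hp q hq => hPW (mk_mem_prod hp hq)⟩

theorem Dense.exists_sub_mem_of_mem_nhds_zero {G : Type*} [AddGroup G] [TopologicalSpace G]
    [IsTopologicalAddGroup G] {S : Set G} (hS : Dense S) (a : G) {N : Set G}
    (hN : N ∈ 𝓝 (0 : G)) : ∃ s ∈ S, a - s ∈ N := by
  have hcont : Continuous (a - ·) := by fun_prop
  have : (a - ·) ⁻¹' N ∈ 𝓝 a := hcont.continuousAt.preimage_mem_nhds (by simpa using hN)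
  obtain ⟨s, hsS, hsN⟩ := hS.inter_nhds_nonempty this
  exact ⟨s, hsS, hsN⟩

/-- The `ℂ`-action is not assumed to commute with the product, so `C` is replaced by a natural
number `n ≥ C`: `b ∈ C • V ⊆ n • V` by balancedness, and `ℕ`-multiples do commute with it. -/
theorem HasRightLocallyBoundedApproxIdentityOn.of_dense {R : Type*}
    [NonUnitalRing R] [Module ℂ R] [TopologicalSpace R] [IsTopologicalAddGroup R]
    [ContinuousSMul ℂ R] [ContinuousMul R] {S : Set R}
    (hS : HasRightLocallyBoundedApproxIdentityOn S) (hdense : Dense S) :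
    HasRightLocallyBoundedApproxIdentity R := by
  classical
  intro U hU
  obtain ⟨W, hW, hWU⟩ := exists_nhds_zero_quarter hU
  obtain ⟨P, hP, hPW⟩ := exists_nhds_zero_mul_mem hW
  obtain ⟨V, ⟨hV, hVbal⟩, hVWUP⟩ :=
    (nhds_basis_balanced ℂ R).mem_iff.mp (inter_mem (inter_mem hW hU) hP)
  obtain ⟨C, hC, hCS⟩ := hS V hV
  obtain ⟨n, hCn⟩ := exists_nat_ge C
  have hCV : (C : ℂ) • V ⊆ (n : ℂ) • V :=
    hVbal.smul_mono (by simpa [abs_of_pos hC] using hCn)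
  have hN : W ∩ (fun e : R => n • -e) ⁻¹' P ∈ 𝓝 (0 : R) :=
    have : Continuous fun e : R => n • -e := by fun_prop
    inter_mem hW (this.continuousAt.preimage_mem_nhds (by simpa using hP))
  choose s hsS hsN using fun a => hdense.exists_sub_mem_of_mem_nhds_zero a hN
  refine ⟨C, hC, fun F => ?_⟩
  obtain ⟨b, hbV, hsb⟩ := hCS (F.image s) (by simp [subset_def, hsS])
  obtain ⟨w, hw, hwb⟩ := hCV hbV
  refine ⟨b, smul_set_mono (fun x hx => (hVWUP hx).1.2) hbV, fun a ha => ?_⟩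
  have hdecomp : a - a * b = (a - s a) + (s a - s a * b) + (n • -(a - s a)) * w + 0 := by
    simp only [← hwb, Nat.cast_smul_eq_nsmul, smul_mul_assoc, mul_smul_comm, neg_mul, sub_mul,
      smul_neg, smul_sub]
    abel
  rw [hdecomp]
  exact hWU (hsN a).1 (hVWUP (hsb _ (Finset.mem_image_of_mem s ha))).1.1
    (hPW _ (hsN a).2 _ (hVWUP hw).2) (mem_of_mem_nhds hW)

theorem stmt_6_general {A B : Type u}
    [NonUnitalRing A] [Module ℂ A] [TopologicalSpace A]
    [NonUnitalRing B] [Module ℂ B] [TopologicalSpace B]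
    [IsTopologicalAddGroup B] [ContinuousSMul ℂ B]
    (hBmul : Continuous fun p : B × B => p.1 * p.2)
    (φ : A →ₙₐ[ℂ] B) (hφcont : Continuous φ) (hφdense : DenseRange φ)
    (hA : ∀ U ∈ 𝓝 (0 : A), ∃ C : ℝ, 0 < C ∧
      ∀ F : Finset A, ∃ b ∈ (C : ℂ) • U, ∀ a ∈ F, a - a * b ∈ U) :
    ∀ U ∈ 𝓝 (0 : B), ∃ C : ℝ, 0 < C ∧
      ∀ F : Finset B, ∃ b ∈ (C : ℂ) • U, ∀ a ∈ F, a - a * b ∈ U :=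
  haveI : ContinuousMul B := ⟨hBmul⟩
  (HasRightLocallyBoundedApproxIdentity.on_range hA φ hφcont).of_dense hφdense

/-- If `φ : A → B` is a continuous homomorphism of topological algebras
with dense range, the multiplication in `B` is jointly continuous, and `A` has a right
locally bounded approximate identity, then so does `B`. -/
theorem stmt_6 {A B : Type u}
    [NonUnitalRing A] [Module ℂ A] [TopologicalSpace A]
    [IsTopologicalAddGroup A] [ContinuousSMul ℂ A]
    [NonUnitalRing B] [Module ℂ B] [TopologicalSpace B]
    [IsTopologicalAddGroup B] [ContinuousSMul ℂ B]
    (hAmul_left : ∀ a : A, Continuous fun b : A => a * b)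
    (hAmul_right : ∀ b : A, Continuous fun a : A => a * b)
    (hBmul : Continuous fun p : B × B => p.1 * p.2)
    (φ : A →ₙₐ[ℂ] B) (hφcont : Continuous φ) (hφdense : DenseRange φ)
    (hA : ∀ U ∈ 𝓝 (0 : A), ∃ C : ℝ, 0 < C ∧
      ∀ F : Finset A, ∃ b ∈ (C : ℂ) • U, ∀ a ∈ F, a - a * b ∈ U) :
    ∀ U ∈ 𝓝 (0 : B), ∃ C : ℝ, 0 < C ∧
      ∀ F : Finset B, ∃ b ∈ (C : ℂ) • U, ∀ a ∈ F, a - a * b ∈ U :=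
  stmt_6_general hBmul φ hφcont hφdense hA
end

section
/- Let A be an Arens–Michael algebra. The following conditions are equivalent: (i) A has a right locally bounded approximate identity; (ii) for every (possibly non-unital) complex Banach algebra B such that there exists a continuous algebra homomorphism φ : A → B with dense range, the algebra B has a right bounded approximate identity, i.e., a net (e_α) in B with sup_α ‖e_α‖ < ∞ and ‖b·e_α − b‖ → 0 for every b ∈ B. -/
/-!
(i) ⇒ (ii): the constant `C` attached to the neighbourhood `φ⁻¹(ball 0 1)` bounds `‖φ b‖`, and
applying (i) to the rescaled sets `(n + 1) • F` gives right approximate identities of norm at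
most `C` with arbitrarily small error on the dense range of `φ`; density carries them over to
all of `B`, and indexing them by (finite set, error) produces the net.

(ii) ⇒ (i): as the family is directed, every `0`-neighbourhood contains a ball of a single
seminorm `p k`. Since `p k` is submultiplicative, the Hausdorff quotient `A_k` of `(A, p k)` is a
normed algebra and `A → A_k` is a continuous surjection; a bounded right approximate identity
of `A_k`, lifted to `A`, provides the elements `b`, and `C` comes from its bound.
-/

open Filter Topology Set Pointwise

universe u

def HasRightLocallyBddApproxIdentity (𝕜 A : Type*) [RCLike 𝕜] [NonUnitalRing A] [Module 𝕜 A]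
    [TopologicalSpace A] : Prop :=
  ∀ U ∈ 𝓝 (0 : A), ∃ C : ℝ, 0 < C ∧
    ∀ F : Finset A, ∃ b ∈ (C : 𝕜) • U, ∀ a ∈ F, a - a * b ∈ U

def HasRightBddApproxIdentity (B : Type u) [NonUnitalNormedRing B] : Prop :=
  ∃ (κ : Type u) (_ : Preorder κ) (_ : IsDirected κ (· ≤ ·)) (_ : Nonempty κ)
    (e : κ → B) (M : ℝ), (∀ i, ‖e i‖ ≤ M) ∧
      ∀ b : B, Tendsto (fun i => ‖b * e i - b‖) atTop (𝓝 (0 : ℝ))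

section NormedRing

variable {B : Type u} [NonUnitalNormedRing B]

theorem hasRightBddApproxIdentity_iff :
    HasRightBddApproxIdentity B ↔
      ∃ M : ℝ, ∀ F : Finset B, ∀ ε > 0, ∃ e : B, ‖e‖ ≤ M ∧ ∀ x ∈ F, ‖x * e - x‖ < ε := by
  constructor
  · rintro ⟨κ, _, _, _, e, M, he, hlim⟩
    refine ⟨M, fun F ε hε => ?_⟩
    have : ∀ᶠ i in atTop, ∀ x ∈ F, ‖x * e i - x‖ < ε :=
      F.eventually_all.2 fun x _ => (hlim x).eventually (gt_mem_nhds hε)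
    obtain ⟨i, hi⟩ := this.exists
    exact ⟨e i, he i, hi⟩
  · classical
    rintro ⟨M, h⟩
    choose e he hF using fun (i : Finset B × ULift.{u} ℕ) =>
      h i.1 (1 / (i.2.down + 1)) Nat.one_div_pos_of_nat
    refine ⟨Finset B × ULift.{u} ℕ, inferInstance, inferInstance, inferInstance, e, M, he,
      fun x => ?_⟩
    refine Metric.tendsto_nhds.2 fun ε hε => ?_
    obtain ⟨N, hN⟩ := exists_nat_one_div_lt hε
    filter_upwards [eventually_ge_atTop (({x}, ⟨N⟩) : Finset B × ULift.{u} ℕ)] with i hi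
    have hx : x ∈ i.1 := hi.1 (Finset.mem_singleton_self x)
    have hNi : 1 / ((i.2.down : ℝ) + 1) ≤ 1 / ((N : ℝ) + 1) :=
      Nat.one_div_le_one_div (show N ≤ i.2.down from hi.2)
    rw [Real.dist_0_eq_abs, abs_of_nonneg (norm_nonneg _)]
    exact ((hF i x hx).trans_le hNi).trans hN

theorem exists_approx_right_identity_of_denseRange {α : Type*} {f : α → B} (hf : DenseRange f)
    {M : ℝ} (h : ∀ F : Finset α, ∀ δ > 0, ∃ e : B, ‖e‖ ≤ M ∧ ∀ a ∈ F, ‖f a * e - f a‖ < δ)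
    (F : Finset B) {ε : ℝ} (hε : 0 < ε) :
    ∃ e : B, ‖e‖ ≤ M ∧ ∀ x ∈ F, ‖x * e - x‖ < ε := by
  classical
  obtain ⟨e₀, he₀, -⟩ := h ∅ 1 one_pos
  have hM : 0 ≤ M := (norm_nonneg e₀).trans he₀
  set δ := ε / (M + 2) with hδ
  have hδpos : 0 < δ := by positivity
  choose g hg using fun x => Metric.denseRange_iff.mp hf x δ hδpos
  obtain ⟨e, he, hFe⟩ := h (F.image g) δ hδpos
  refine ⟨e, he, fun x hx => ?_⟩
  have hxg : ‖x - f (g x)‖ < δ := by rw [← dist_eq_norm]; exact hg x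
  have hge := hFe (g x) (Finset.mem_image_of_mem g hx)
  calc ‖x * e - x‖
      = ‖(x - f (g x)) * e + (f (g x) * e - f (g x)) + (f (g x) - x)‖ := by
        congr 1; noncomm_ring
    _ ≤ ‖x - f (g x)‖ * ‖e‖ + ‖f (g x) * e - f (g x)‖ + ‖f (g x) - x‖ :=
        (norm_add₃_le).trans (by gcongr; exact norm_mul_le _ _)
    _ < δ * M + δ + δ := by
        have := mul_le_mul hxg.le he (norm_nonneg e) hδpos.le
        rw [norm_sub_rev (f (g x))]
        linarith
    _ = ε := by rw [hδ]; field_simp; ring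

end NormedRing

section Forward

variable {𝕜 A : Type*} [RCLike 𝕜] [NonUnitalRing A] [Module 𝕜 A] [TopologicalSpace A]

theorem HasRightLocallyBddApproxIdentity.exists_approx_right_identity_map {B : Type*}
    [NonUnitalNormedRing B] [NormedSpace 𝕜 B] (hA : HasRightLocallyBddApproxIdentity 𝕜 A) (φ : A →ₙₐ[𝕜] B) (hφ : Continuous φ) :
    ∃ M : ℝ, ∀ F : Finset A, ∀ δ > 0, ∃ e : B, ‖e‖ ≤ M ∧ ∀ a ∈ F, ‖φ a * e - φ a‖ < δ := by
  classical
  have hU : φ ⁻¹' Metric.ball 0 1 ∈ 𝓝 (0 : A) :=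
    hφ.continuousAt.preimage_mem_nhds (by simpa using Metric.ball_mem_nhds (0 : B) one_pos)
  obtain ⟨C, hC, H⟩ := hA _ hU
  refine ⟨C, fun F δ hδ => ?_⟩
  obtain ⟨n, hn⟩ := exists_nat_one_div_lt hδ
  obtain ⟨b, hbC, hb⟩ := H (F.image ((n + 1) • ·))
  refine ⟨φ b, ?_, fun a ha => ?_⟩
  · obtain ⟨u, hu, rfl⟩ := hbC
    have hu : ‖φ u‖ < 1 := by simpa using hu
    rw [map_smul, norm_smul, RCLike.norm_ofReal, abs_of_pos hC]
    nlinarith [norm_nonneg (φ u)]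
  · have h : ‖φ ((n + 1) • a - ((n + 1) • a) * b)‖ < 1 := by
      simpa using hb _ (Finset.mem_image_of_mem _ ha)
    rw [smul_mul_assoc, ← smul_sub, map_nsmul, ← Nat.cast_smul_eq_nsmul 𝕜, norm_smul,
      RCLike.norm_natCast] at h
    calc ‖φ a * φ b - φ a‖ = ‖φ (a - a * b)‖ := by rw [norm_sub_rev, map_sub, map_mul]
      _ < 1 / (n + 1) := by
        rw [lt_div_iff₀ (by positivity)]
        push_cast at h
        linarith
      _ < δ := hn

theorem HasRightLocallyBddApproxIdentity.hasRightBddApproxIdentity_of_denseRange {B : Type u}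
    [NonUnitalNormedRing B] [NormedSpace 𝕜 B] (hA : HasRightLocallyBddApproxIdentity 𝕜 A)
    (φ : A →ₙₐ[𝕜] B) (hφ : Continuous φ) (hφd : DenseRange φ) : HasRightBddApproxIdentity B :=
  let ⟨M, hM⟩ := hA.exists_approx_right_identity_map φ hφ
  hasRightBddApproxIdentity_iff.2
    ⟨M, fun F _ hε => exists_approx_right_identity_of_denseRange hφd hM F hε⟩

end Forward

theorem WithSeminorms.exists_ball_subset_of_directed {𝕜 E ι : Type*} [NormedField 𝕜]
    [AddCommGroup E] [Module 𝕜 E] [TopologicalSpace E] [Nonempty ι] {p : SeminormFamily 𝕜 E ι}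
    (hp : WithSeminorms p) (hdir : Directed (· ≤ ·) p) {U : Set E} (hU : U ∈ 𝓝 (0 : E)) :
    ∃ k, ∃ ε > 0, (p k).ball 0 ε ⊆ U := by
  obtain ⟨s, ε, hε, hs⟩ := (hp.mem_nhds_iff 0 U).1 hU
  obtain ⟨k, hk⟩ := hdir.finset_le s
  exact ⟨k, ε, hε, (Seminorm.ball_antitone (Finset.sup_le hk)).trans hs⟩

section SubmultiplicativeSeminorm

variable {𝕜 : Type*} {A : Type u} [NormedField 𝕜] [NonUnitalRing A] [Module 𝕜 A]

/-- `A` with the seminormed algebra structure of `q`; its separation quotient is the normed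
algebra `A_q` of the Arens–Michael decomposition. -/
def WithSubmulSeminorm (q : Seminorm 𝕜 A) (_ : ∀ a b : A, q (a * b) ≤ q a * q b) : Type u := A

namespace WithSubmulSeminorm

variable (q : Seminorm 𝕜 A) (hq : ∀ a b : A, q (a * b) ≤ q a * q b)

instance : NonUnitalRing (WithSubmulSeminorm q hq) := ‹NonUnitalRing A›

instance : Module 𝕜 (WithSubmulSeminorm q hq) := ‹Module 𝕜 A›

instance : NonUnitalSeminormedRing (WithSubmulSeminorm q hq) :=
  { (inferInstance : NonUnitalRing (WithSubmulSeminorm q hq)),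
    q.toAddGroupSeminorm.toSeminormedAddCommGroup with
    norm_mul_le := hq }

instance : NormedSpace 𝕜 (WithSubmulSeminorm q hq) where
  norm_smul_le c (x : A) := (map_smul_eq_mul q c x).le

def mkQ : A →ₙₐ[𝕜] SeparationQuotient (WithSubmulSeminorm q hq) where
  toFun a := SeparationQuotient.mk (show WithSubmulSeminorm q hq from a)
  map_smul' _ _ := rfl
  map_zero' := rfl
  map_add' _ _ := rfl
  map_mul' _ _ := rfl

theorem norm_mkQ (a : A) : ‖mkQ q hq a‖ = q a := rfl

theorem surjective_mkQ : Function.Surjective (mkQ q hq) :=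
  SeparationQuotient.surjective_mk (X := WithSubmulSeminorm q hq)

theorem continuous_mkQ [TopologicalSpace A] [IsTopologicalAddGroup A] (hc : Continuous q) :
    Continuous (mkQ q hq) := by
  refine continuous_of_tendsto_nhds_zero (mkQ q hq) (tendsto_zero_iff_norm_tendsto_zero.2 ?_)
  simpa only [norm_mkQ, map_zero] using hc.tendsto 0

theorem exists_approx_right_identity
    (h : HasRightBddApproxIdentity (SeparationQuotient (WithSubmulSeminorm q hq))) :
    ∃ M : ℝ, ∀ F : Finset A, ∀ ε > 0, ∃ b : A, q b ≤ M ∧ ∀ a ∈ F, q (a - a * b) < ε := by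
  classical
  obtain ⟨M, hM⟩ := hasRightBddApproxIdentity_iff.1 h
  refine ⟨M, fun F ε hε => ?_⟩
  obtain ⟨e, he, hF⟩ := hM (F.image (mkQ q hq)) ε hε
  obtain ⟨b, rfl⟩ := surjective_mkQ q hq e
  refine ⟨b, he, fun a ha => ?_⟩
  have := hF _ (Finset.mem_image_of_mem _ ha)
  rwa [← map_mul, ← map_sub, norm_mkQ, ← map_neg_eq_map, neg_sub] at this

end WithSubmulSeminorm

end SubmultiplicativeSeminorm

theorem hasRightLocallyBddApproxIdentity_of_withSeminorms {𝕜 : Type*} {A : Type u} {ι : Type*}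
    [RCLike 𝕜] [NonUnitalRing A] [Module 𝕜 A] [TopologicalSpace A] [Nonempty ι]
    {p : SeminormFamily 𝕜 A ι} (hp : WithSeminorms p) (hdir : Directed (· ≤ ·) p)
    (hsub : ∀ i a b, p i (a * b) ≤ p i a * p i b)
    (h : ∀ i, HasRightBddApproxIdentity (SeparationQuotient (WithSubmulSeminorm (p i) (hsub i)))) :
    HasRightLocallyBddApproxIdentity 𝕜 A := by
  intro U hU
  obtain ⟨k, ε, hε, hkU⟩ := hp.exists_ball_subset_of_directed hdir hU
  obtain ⟨M, hM⟩ := WithSubmulSeminorm.exists_approx_right_identity _ _ (h k)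
  have hC : 0 < (|M| + 1) / ε := by positivity
  refine ⟨(|M| + 1) / ε, hC, fun F => ?_⟩
  obtain ⟨b, hbM, hb⟩ := hM F ε hε
  refine ⟨b, smul_set_mono hkU ?_, fun a ha => hkU ((p k).mem_ball_zero.2 (hb a ha))⟩
  rw [Seminorm.smul_ball_zero (RCLike.ofReal_ne_zero.2 hC.ne'), Seminorm.mem_ball_zero,
    RCLike.norm_ofReal, abs_of_pos hC, div_mul_cancel₀ _ hε.ne']
  linarith [le_abs_self M]

theorem stmt_7_general {A : Type u} [NonUnitalRing A] [Module ℂ A] [UniformSpace A]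
    {ι : Type u} [Nonempty ι] (p : SeminormFamily ℂ A ι) (hp : WithSeminorms p)
    (hdir : ∀ i j : ι, ∃ k, ∀ a : A, p i a ≤ p k a ∧ p j a ≤ p k a)
    (hsub : ∀ (i : ι) (a b : A), p i (a * b) ≤ p i a * p i b) :
    (∀ U ∈ 𝓝 (0 : A), ∃ C : ℝ, 0 < C ∧
      ∀ F : Finset A, ∃ b ∈ (C : ℂ) • U, ∀ a ∈ F, a - a * b ∈ U) ↔
    (∀ (B : Type u) (_ : NonUnitalNormedRing B) (_ : NormedSpace ℂ B)
      (φ : A →ₙₐ[ℂ] B), Continuous φ → DenseRange φ →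
      ∃ (κ : Type u) (_ : Preorder κ) (_ : IsDirected κ (· ≤ ·)) (_ : Nonempty κ)
        (e : κ → B) (M : ℝ), (∀ i, ‖e i‖ ≤ M) ∧
          ∀ b : B, Tendsto (fun i => ‖b * e i - b‖) atTop (𝓝 (0 : ℝ))) := by
  have : IsTopologicalAddGroup A := hp.topologicalAddGroup
  refine ⟨fun hA B _ _ φ hφ hφd =>
    HasRightLocallyBddApproxIdentity.hasRightBddApproxIdentity_of_denseRange hA φ hφ hφd,
    fun hB => hasRightLocallyBddApproxIdentity_of_withSeminorms hp ?_ hsub fun i => ?_⟩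
  · exact fun i j => (hdir i j).imp fun k hk => ⟨fun a => (hk a).1, fun a => (hk a).2⟩
  · exact hB _ inferInstance inferInstance (WithSubmulSeminorm.mkQ (p i) (hsub i))
      (WithSubmulSeminorm.continuous_mkQ _ _ (hp.continuous_seminorm i))
      (WithSubmulSeminorm.surjective_mkQ _ _).denseRange

/-- An Arens–Michael algebra `A` has a right locally bounded approximate
identity iff every Banach algebra `B` admitting a continuous homomorphism `A → B` with
dense range has a right bounded approximate identity. -/
theorem stmt_7 {A : Type u} [NonUnitalRing A] [Module ℂ A] [UniformSpace A]
    [IsUniformAddGroup A] [ContinuousSMul ℂ A] [CompleteSpace A] [T2Space A]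
    {ι : Type u} [Nonempty ι] (p : SeminormFamily ℂ A ι) (hp : WithSeminorms p)
    (hdir : ∀ i j : ι, ∃ k, ∀ a : A, p i a ≤ p k a ∧ p j a ≤ p k a)
    (hsub : ∀ (i : ι) (a b : A), p i (a * b) ≤ p i a * p i b) :
    (∀ U ∈ 𝓝 (0 : A), ∃ C : ℝ, 0 < C ∧
      ∀ F : Finset A, ∃ b ∈ (C : ℂ) • U, ∀ a ∈ F, a - a * b ∈ U) ↔
    (∀ (B : Type u) (_ : NonUnitalNormedRing B) (_ : NormedSpace ℂ B)
      (φ : A →ₙₐ[ℂ] B), Continuous φ → DenseRange φ →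
      ∃ (κ : Type u) (_ : Preorder κ) (_ : IsDirected κ (· ≤ ·)) (_ : Nonempty κ)
        (e : κ → B) (M : ℝ), (∀ i, ‖e i‖ ≤ M) ∧
          ∀ b : B, Tendsto (fun i => ‖b * e i - b‖) atTop (𝓝 (0 : ℝ))) :=
  stmt_7_general p hp hdir hsub
end

section
/- Let A be an Arens–Michael algebra, X a complete locally convex right A-module with jointly continuous module action, and I ⊆ A a closed left ideal. Let p be a continuous seminorm on X, let Y be a Banach space which is a right A-module with jointly continuous action, and let τ : X → Y be a continuous A-module morphism with dense range satisfying ‖τ(x)‖ = p(x) for all x ∈ X (so that (Y, τ) is the completion of X with respect to p). Write X·I for the linear span of {x·c : x ∈ X, c ∈ I} and Y·I for the linear span of {η·c : η ∈ Y, c ∈ I}. Then for every x ∈ X, inf{ p(x + y) : y ∈ X·I } = dist( τ(x), closure of Y·I in Y ). Equivalently, the induced linear map X/cl(X·I) → Y/cl(Y·I), x + cl(X·I) ↦ τ(x) + cl(Y·I), is isometric (from the quotient seminorm of p to the quotient norm) and has dense range, so that Y/cl(Y·I) is the completion of X/cl(X·I) with respect to the quotient seminorm of p. -/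
open Set

universe u

/-! Since `τ` intertwines the actions, it maps `X·I` into `Y·I`; since it has dense range and
`η ↦ η·c` is continuous, `Y·I` lies in the closure of `τ(X·I)`. Hence `Y·I` and `τ(X·I)` have
the same closure, and the distance from `τ x` to `τ(X·I)` is `inf_{y ∈ X·I} ‖τ (x + y)‖`,
which is the infimum of `p(x + y)` because `τ` is isometric for `p`. -/

section InfDist

variable {X Y F σ : Type*} [AddCommGroup X] [SeminormedAddCommGroup Y]
  [FunLike F X Y] [AddMonoidHomClass F X Y] [SetLike σ X] [AddSubgroupClass σ X]

theorem iInf_norm_map_add_eq_infDist_image (f : F) (S : σ) (x : X) :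
    ⨅ y : S, ‖f (x + y)‖ = Metric.infDist (f x) (f '' S) := by
  have : Nonempty S := ⟨0⟩
  have hbdd : BddBelow (range fun y : S => ‖f (x + y)‖) :=
    ⟨0, by rintro _ ⟨y, rfl⟩; exact norm_nonneg _⟩
  have hbdd' : BddBelow (range fun z : f '' S => dist (f x) z) :=
    ⟨0, by rintro _ ⟨z, rfl⟩; exact dist_nonneg⟩
  rw [Metric.infDist_eq_iInf]
  refine le_antisymm (le_ciInf ?_) (le_ciInf ?_)
  · rintro ⟨_, y, hy, rfl⟩
    refine (ciInf_le hbdd ⟨-y, neg_mem hy⟩).trans_eq ?_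
    rw [dist_eq_norm, ← map_sub, sub_eq_add_neg]
  · rintro ⟨y, hy⟩
    refine (ciInf_le hbdd' ⟨f (-y), -y, neg_mem hy, rfl⟩).trans_eq ?_
    rw [dist_eq_norm, ← map_sub, sub_neg_eq_add]

end InfDist

section ActionSpan

variable (R : Type*) {A M N : Type*} [Semiring R] [AddCommMonoid M] [Module R M]
  [AddCommMonoid N] [Module R N]

/-- The submodule `M·I`, writing `act m c` as `m·c`. -/
def actionSpan (act : M → A → M) (I : Set A) : Submodule R M :=
  Submodule.span R {z | ∃ (w : M) (c : A), c ∈ I ∧ z = act w c}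

variable {R}

theorem map_actionSpan_le {actM : M → A → M} {actN : N → A → N} (f : M →ₗ[R] N)
    (hf : ∀ m a, f (actM m a) = actN (f m) a) (I : Set A) :
    (actionSpan R actM I).map f ≤ actionSpan R actN I := by
  rw [actionSpan, Submodule.map_span]
  refine Submodule.span_mono ?_
  rintro _ ⟨_, ⟨w, c, hc, rfl⟩, rfl⟩
  exact ⟨f w, c, hc, hf w c⟩

theorem actionSpan_le_topologicalClosure_map [TopologicalSpace N] [ContinuousAdd N]
    [ContinuousConstSMul R N] {actM : M → A → M} {actN : N → A → N} (f : M →ₗ[R] N)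
    (hf : ∀ m a, f (actM m a) = actN (f m) a) (hdense : DenseRange f) (I : Set A)
    (hcont : ∀ c ∈ I, Continuous fun n => actN n c) :
    actionSpan R actN I ≤ ((actionSpan R actM I).map f).topologicalClosure := by
  refine Submodule.span_le.mpr ?_
  rintro _ ⟨w, c, hc, rfl⟩
  refine map_mem_closure (f := fun n => actN n c) (hcont c hc) (hdense w) ?_
  rintro _ ⟨v, rfl⟩
  exact ⟨actM v c, Submodule.subset_span ⟨v, c, hc, rfl⟩, hf v c⟩

theorem closure_actionSpan_eq_closure_image [TopologicalSpace N] [ContinuousAdd N]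
    [ContinuousConstSMul R N] {actM : M → A → M} {actN : N → A → N} (f : M →ₗ[R] N)
    (hf : ∀ m a, f (actM m a) = actN (f m) a) (hdense : DenseRange f) (I : Set A)
    (hcont : ∀ c ∈ I, Continuous fun n => actN n c) :
    closure (actionSpan R actN I : Set N) = closure (f '' actionSpan R actM I) := by
  refine le_antisymm ?_ (closure_mono (map_actionSpan_le f hf I))
  refine closure_minimal ?_ isClosed_closure
  exact actionSpan_le_topologicalClosure_map f hf hdense I hcont

end ActionSpan

theorem stmt_8_general {A : Type u} [NonUnitalRing A] [Module ℂ A] [UniformSpace A]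
    -- the complete locally convex right `A`-module `X`
    {X : Type u} [AddCommGroup X] [Module ℂ X] [UniformSpace X]
    (actX : X → A → X)
    -- the closed left ideal `I`
    (I : Submodule ℂ A)
    -- the continuous seminorm `P` on `X`
    (P : Seminorm ℂ X)
    -- the Banach right `A`-module `Y`
    {Y : Type u} [NormedAddCommGroup Y] [NormedSpace ℂ Y]
    (actY : Y → A → Y)
    (hY_cont : Continuous fun z : Y × A => actY z.1 z.2)
    -- the canonical morphism `τ : X → Y`
    (τ : X →L[ℂ] Y) (hτ_mod : ∀ (x : X) (a : A), τ (actX x a) = actY (τ x) a)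
    (hτ_dense : DenseRange τ) (hτ_norm : ∀ x : X, ‖τ x‖ = P x)
    (x : X) :
    (⨅ y : (Submodule.span ℂ {z : X | ∃ (w : X) (c : A), c ∈ I ∧ z = actX w c}),
        P (x + (y : X))) =
      Metric.infDist (τ x)
        (closure ((Submodule.span ℂ
          {z : Y | ∃ (w : Y) (c : A), c ∈ I ∧ z = actY w c} : Submodule ℂ Y) : Set Y)) := by
  change ⨅ y : actionSpan ℂ actX (I : Set A), P (x + y) =
    Metric.infDist (τ x) (closure (actionSpan ℂ actY (I : Set A) : Set Y))
  have hcont : ∀ c ∈ (I : Set A), Continuous fun η : Y => actY η c := fun c _ =>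
    hY_cont.comp (continuous_id.prodMk continuous_const)
  rw [closure_actionSpan_eq_closure_image (τ : X →ₗ[ℂ] Y) hτ_mod hτ_dense _ hcont,
    ContinuousLinearMap.coe_coe, Metric.infDist_closure, ← iInf_norm_map_add_eq_infDist_image τ]
  simp only [hτ_norm]

/-- Let `A` be an Arens–Michael algebra, `X` a complete locally convex
right `A`-module with jointly continuous action, `I ⊆ A` a closed left ideal, `P` a
continuous seminorm on `X`, and `(Y, τ)` the completion of `X` with respect to `P`
(`Y` a Banach right `A`-module, `τ` a continuous module morphism with dense range,
`‖τ x‖ = P x`).  Then for every `x ∈ X`,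
`inf { P (x + y) : y ∈ span (X·I) } = dist (τ x, closure (span (Y·I)))`. -/
theorem stmt_8 {A : Type u} [NonUnitalRing A] [Module ℂ A] [UniformSpace A]
    [IsUniformAddGroup A] [ContinuousSMul ℂ A] [CompleteSpace A] [T2Space A]
    {ι : Type u} [Nonempty ι] (q : SeminormFamily ℂ A ι) (hq : WithSeminorms q)
    (hqdir : ∀ i j : ι, ∃ k, ∀ a : A, q i a ≤ q k a ∧ q j a ≤ q k a)
    (hqsub : ∀ (i : ι) (a b : A), q i (a * b) ≤ q i a * q i b)
    -- the complete locally convex right `A`-module `X`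
    {X : Type u} [AddCommGroup X] [Module ℂ X] [UniformSpace X] [IsUniformAddGroup X]
    [ContinuousSMul ℂ X] [CompleteSpace X] [T2Space X]
    [Module ℝ X] [IsScalarTower ℝ ℂ X] [LocallyConvexSpace ℝ X]
    (actX : X → A → X)
    (hX_add_left : ∀ (x y : X) (a : A), actX (x + y) a = actX x a + actX y a)
    (hX_add_right : ∀ (x : X) (a b : A), actX x (a + b) = actX x a + actX x b)
    (hX_smul_left : ∀ (c : ℂ) (x : X) (a : A), actX (c • x) a = c • actX x a)
    (hX_smul_right : ∀ (c : ℂ) (x : X) (a : A), actX x (c • a) = c • actX x a)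
    (hX_mul : ∀ (x : X) (a b : A), actX x (a * b) = actX (actX x a) b)
    (hX_cont : Continuous fun z : X × A => actX z.1 z.2)
    -- the closed left ideal `I`
    (I : Submodule ℂ A) (hI_closed : IsClosed (I : Set A))
    (hI_left : ∀ a : A, ∀ c ∈ I, a * c ∈ I)
    -- the continuous seminorm `P` on `X`
    (P : Seminorm ℂ X) (hP_cont : Continuous fun x : X => P x)
    -- the Banach right `A`-module `Y`
    {Y : Type u} [NormedAddCommGroup Y] [NormedSpace ℂ Y] [CompleteSpace Y]
    (actY : Y → A → Y)
    (hY_add_left : ∀ (x y : Y) (a : A), actY (x + y) a = actY x a + actY y a)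
    (hY_add_right : ∀ (x : Y) (a b : A), actY x (a + b) = actY x a + actY x b)
    (hY_smul_left : ∀ (c : ℂ) (x : Y) (a : A), actY (c • x) a = c • actY x a)
    (hY_smul_right : ∀ (c : ℂ) (x : Y) (a : A), actY x (c • a) = c • actY x a)
    (hY_mul : ∀ (x : Y) (a b : A), actY x (a * b) = actY (actY x a) b)
    (hY_cont : Continuous fun z : Y × A => actY z.1 z.2)
    -- the canonical morphism `τ : X → Y`
    (τ : X →L[ℂ] Y) (hτ_mod : ∀ (x : X) (a : A), τ (actX x a) = actY (τ x) a)
    (hτ_dense : DenseRange τ) (hτ_norm : ∀ x : X, ‖τ x‖ = P x)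
    (x : X) :
    (⨅ y : (Submodule.span ℂ {z : X | ∃ (w : X) (c : A), c ∈ I ∧ z = actX w c}),
        P (x + (y : X))) =
      Metric.infDist (τ x)
        (closure ((Submodule.span ℂ
          {z : Y | ∃ (w : Y) (c : A), c ∈ I ∧ z = actY w c} : Submodule ℂ Y) : Set Y)) :=
  stmt_8_general actX I P actY hY_cont τ hτ_mod hτ_dense hτ_norm x
end

section
/- Let A be a quasinormable Fréchet–Arens–Michael algebra with a right locally bounded approximate identity. Then A has a right bounded approximate identity, i.e., a net (e_α) in A such that {e_α} is von Neumann bounded and a·e_α → a for every a ∈ A. -/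
open Filter Topology Bornology Set Pointwise

universe u

/-!
Put `q n = sup_{k ≤ n} p k`. Quasinormability splits each local approximate unit of level `n`
as `c + d`, with `c` in a bounded set and `d` small at the levels `≤ n`. Inductively one builds,
for every stage `n`, right approximate units `u` for the levels `< n` with `q k u ≤ φₙ k`: if `v`
is a stage-`n` unit absorbing `c + d`, then `u' = v + c - c v` (so `1 - u' = (1 - c) (1 - v)`)
works at level `n` too, while at the levels `k < n` it differs from `v` only by
`(c + d) (1 - v) - d (1 - v)`, which is as small as we like. Hence `φₙ₊₁ k ≤ φₙ k + 3 * 2⁻ⁿ` for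
`k < n`, the profiles stay bounded at every level, and the units of all stages, indexed by
(finite set, stage), form a bounded right approximate identity.
-/

theorem exists_seq_of_exists_succ {α : Type*} {P : ℕ → α → Prop} {R : ℕ → α → α → Prop}
    {x₀ : α} (h₀ : P 0 x₀) (h : ∀ n x, P n x → ∃ y, P (n + 1) y ∧ R n x y) :
    ∃ f : ℕ → α, ∀ n, P n (f n) ∧ R n (f n) (f (n + 1)) := by
  choose g hgP hgR using h
  let s : ∀ n, {x // P n x} := fun n =>
    Nat.rec ⟨x₀, h₀⟩ (fun n x => ⟨g n x.1 x.2, hgP n x.1 x.2⟩) n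
  exact ⟨fun n => (s n).1, fun n => ⟨(s n).2, hgR n (s n).1 (s n).2⟩⟩

theorem bddAbove_range_of_le_add_geometric {x : ℕ → ℝ} {c : ℝ} {N : ℕ} (hc : 0 ≤ c)
    (h : ∀ n ≥ N, x (n + 1) ≤ x n + c * 2⁻¹ ^ n) : BddAbove (range x) := by
  have tail : ∀ n ≥ N, x n + 2 * c * 2⁻¹ ^ n ≤ x N + 2 * c * 2⁻¹ ^ N := by
    intro n hn
    induction n, hn using Nat.le_induction with
    | base => exact le_rfl
    | succ n hn ih =>
      have := h n hn
      rw [pow_succ]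
      linarith
  refine (((finite_Iio N).image x).bddAbove.union
    (bddAbove_Iic (a := x N + 2 * c * 2⁻¹ ^ N))).mono ?_
  rintro _ ⟨n, rfl⟩
  rcases lt_or_ge n N with hn | hn
  · exact Or.inl ⟨n, hn, rfl⟩
  · have := tail n hn
    have : 0 ≤ 2 * c * (2⁻¹ : ℝ) ^ n := by positivity
    exact Or.inr (by simp only [mem_Iic]; linarith)

namespace Seminorm

variable {𝕜 A : Type*} [SeminormedRing 𝕜] [NonUnitalRing A]

section Submultiplicative

variable [SMul 𝕜 A] {p : Seminorm 𝕜 A}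

theorem sub_mul_le_mul_one_add (hp : ∀ x y, p (x * y) ≤ p x * p y) (x y : A) :
    p (x - x * y) ≤ p x * (1 + p y) :=
  calc p (x - x * y) ≤ p x + p (x * y) := map_sub_le_add p _ _
    _ ≤ p x + p x * p y := by gcongr; exact hp x y
    _ = p x * (1 + p y) := by ring

theorem add_sub_mul_le (hp : ∀ x y, p (x * y) ≤ p x * p y) (c d v : A) :
    p (v + (c - c * v)) ≤ p v + p (c + d - (c + d) * v) + p d * (1 + p v) := by
  have hdecomp : v + (c - c * v) = v + (c + d - (c + d) * v) - (d - d * v) := by noncomm_ring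
  rw [hdecomp]
  exact (map_sub_le_add _ _ _).trans
    (add_le_add (map_add_le_add _ _ _) (sub_mul_le_mul_one_add hp d v))

theorem sub_mul_add_sub_mul_le (hp : ∀ x y, p (x * y) ≤ p x * p y)
    (a c d v : A) :
    p (a - a * (v + (c - c * v))) ≤ (p (a - a * (c + d)) + p a * p d) * (1 + p v) := by
  have hdecomp : a - a * (v + (c - c * v)) =
      (a - a * (c + d) - (a - a * (c + d)) * v) + (a * d - a * d * v) := by noncomm_ring
  rw [hdecomp, add_mul]
  refine (map_add_le_add _ _ _).trans (add_le_add (sub_mul_le_mul_one_add hp _ v) ?_)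
  exact (sub_mul_le_mul_one_add hp _ v).trans (by gcongr; exact hp a d)

end Submultiplicative

theorem finset_sup_apply_mul_le [Module 𝕜 A] {ι : Type*} (s : Finset ι) {p : ι → Seminorm 𝕜 A}
    (hp : ∀ i x y, p i (x * y) ≤ p i x * p i y) (x y : A) :
    s.sup p (x * y) ≤ s.sup p x * s.sup p y :=
  finset_sup_apply_le (by positivity) fun i hi =>
    (hp i x y).trans (mul_le_mul (le_finset_sup_apply hi) (le_finset_sup_apply hi)
      (apply_nonneg _ _) (apply_nonneg _ _))

end Seminorm

section ApproxUnits

variable {𝕜 A : Type*} [SeminormedRing 𝕜] [NonUnitalRing A] [SMul 𝕜 A] (q : ℕ → Seminorm 𝕜 A)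

def RightApproxUnitsBelow (n : ℕ) (φ : ℕ → ℝ) (θ : ℝ) : Prop :=
  ∀ (G : Finset A) (δ : ℝ), 0 < δ → ∃ u : A, (∀ k, q k u ≤ φ k) ∧
    ∀ a ∈ G, ∀ j < n, q j (a - a * u) ≤ δ + θ * q j a

/-- What quasinormability adds to a locally bounded approximate identity: the local approximate
units `c + d` of level `n` split into `c` from a bounded set (profile `β`) and `d` that is
`ε`-small at the levels `≤ n`. -/
def SplitsRightApproxUnits (n : ℕ) (C : ℝ) : Prop :=
  ∀ ε > 0, ∃ β : ℕ → ℝ, ∀ (G : Finset A) (δ : ℝ), 0 < δ → ∃ c d : A,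
    (∀ k, q k c ≤ β k) ∧ (∀ k ≤ n, q k d ≤ ε) ∧ (∀ k ≤ n, q k (c + d) ≤ C) ∧
    ∀ a ∈ G, ∀ j ≤ n, q j (a - a * (c + d)) ≤ δ

theorem rightApproxUnitsBelow_zero (θ : ℝ) : RightApproxUnitsBelow q 0 0 θ :=
  fun _ _ _ => ⟨0, by simp, by simp⟩

variable {q}

theorem RightApproxUnitsBelow.succ (hmul : ∀ k x y, q k (x * y) ≤ q k x * q k y)
    {n : ℕ} {φ : ℕ → ℝ} {θ C τ η : ℝ} (hu : RightApproxUnitsBelow q n φ θ)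
    (hsplit : SplitsRightApproxUnits q n C) (hθ : 0 ≤ θ) (hθC : θ * C ≤ τ) (hτ : 0 < τ)
    (hη : 0 < η) :
    ∃ φ' : ℕ → ℝ, RightApproxUnitsBelow q (n + 1) φ' η ∧ ∀ k < n, φ' k ≤ φ k + 3 * τ := by
  obtain ⟨Φ, hΦ, hφΦ⟩ : ∃ Φ, 0 ≤ Φ ∧ ∀ j ≤ n, φ j ≤ Φ :=
    ⟨∑ j ∈ Finset.range (n + 1), |φ j|, by positivity, fun j hj => (le_abs_self _).trans
      (Finset.single_le_sum (fun i _ => abs_nonneg (φ i)) (Finset.mem_range.2 (by omega)))⟩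
  set ε := min τ η / (1 + Φ)
  have hε : 0 < ε := by positivity
  have hεΦ : ε * (1 + Φ) = min τ η := div_mul_cancel₀ _ (by positivity)
  obtain ⟨β, hβ⟩ := hsplit ε hε
  refine ⟨fun k => if k < n then φ k + 3 * τ else φ k + β k * (1 + φ k),
    fun G δ hδ => ?_, fun k hk => by simp [hk]⟩
  obtain ⟨c, d, hc, hd, hw, hwres⟩ := hβ G (δ / (1 + Φ)) (by positivity)
  obtain ⟨v, hv, hvres⟩ := hu {c + d} τ hτ
  have hvΦ : ∀ k ≤ n, q k v ≤ Φ := fun k hk => (hv k).trans (hφΦ k hk)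
  refine ⟨v + (c - c * v), fun k => ?_, fun a ha j hj => ?_⟩
  · dsimp only
    split_ifs with hk
    · calc q k (v + (c - c * v))
          ≤ q k v + q k (c + d - (c + d) * v) + q k d * (1 + q k v) :=
            Seminorm.add_sub_mul_le (hmul k) c d v
        _ ≤ φ k + (τ + θ * C) + ε * (1 + Φ) := by
            gcongr
            · exact hv k
            · exact (hvres _ (Finset.mem_singleton_self _) k hk).trans
                (by gcongr; exact hw k hk.le)
            · exact hd k hk.le
            · exact hvΦ k hk.le
        _ ≤ φ k + 3 * τ := by linarith [min_le_left τ η]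
    · have hβk : 0 ≤ β k := (apply_nonneg _ _).trans (hc k)
      calc q k (v + (c - c * v)) ≤ q k v + q k c * (1 + q k v) :=
            (map_add_le_add _ _ _).trans
              (by gcongr; exact Seminorm.sub_mul_le_mul_one_add (hmul k) c v)
        _ ≤ φ k + β k * (1 + φ k) := by
            gcongr
            · exact hv k
            · exact hc k
            · exact hv k
  · have hjn : j ≤ n := Nat.lt_succ_iff.mp hj
    calc q j (a - a * (v + (c - c * v)))
        ≤ (q j (a - a * (c + d)) + q j a * q j d) * (1 + q j v) :=
          Seminorm.sub_mul_add_sub_mul_le (hmul j) a c d v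
      _ ≤ (δ / (1 + Φ) + q j a * ε) * (1 + Φ) := by
          gcongr
          · exact hwres a ha j hjn
          · exact hd j hjn
          · exact hvΦ j hjn
      _ ≤ δ + η * q j a := by
          rw [add_mul, div_mul_cancel₀ _ (by positivity), mul_assoc, hεΦ, mul_comm η]
          gcongr
          exact min_le_right τ η

end ApproxUnits

section QuasinormableAlgebra

variable {A : Type u} [NonUnitalRing A] [Module ℂ A] [TopologicalSpace A]
  {q : ℕ → Seminorm ℂ A}

theorem exists_splitsRightApproxUnits (hq : WithSeminorms q) (hmono : Monotone q)
    (hquasinorm : ∀ U ∈ 𝓝 (0 : A), ∃ V ∈ 𝓝 (0 : A), V ⊆ U ∧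
      ∀ ε : ℝ, 0 < ε → ∃ B : Set A, IsVonNBounded ℂ B ∧ V ⊆ B + (ε : ℂ) • U)
    (hlbai : ∀ U ∈ 𝓝 (0 : A), ∃ C : ℝ, 0 < C ∧
      ∀ F : Finset A, ∃ b ∈ (C : ℂ) • U, ∀ a ∈ F, a - a * b ∈ U) (n : ℕ) :
    ∃ C ≥ 1, SplitsRightApproxUnits q n C := by
  classical
  have hU : (q n).ball 0 1 ∈ 𝓝 (0 : A) :=
    (hq.mem_nhds_iff _ _).2 ⟨{n}, 1, one_pos, by rw [Finset.sup_singleton]⟩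
  have hU' : ∀ x ∈ (q n).ball 0 1, ∀ k ≤ n, q k x ≤ 1 := fun x hx k hk =>
    (hmono hk x).trans ((Seminorm.mem_ball_zero _).1 hx).le
  obtain ⟨V, hV, hVU, hVB⟩ := hquasinorm _ hU
  obtain ⟨C, hC, hb⟩ := hlbai V hV
  have hnormC : ‖(C : ℂ)‖ = C := Complex.norm_of_nonneg hC.le
  refine ⟨max C 1, le_max_right _ _, fun ε hε => ?_⟩
  obtain ⟨B, hB, hVB⟩ := hVB (ε / C) (by positivity)
  choose r _ hr using (hq.isVonNBounded_iff_seminorm_bounded).1 hB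
  refine ⟨fun k => C * r k, fun G δ hδ => ?_⟩
  obtain ⟨M, hM⟩ := exists_nat_gt δ⁻¹
  have hMpos : (0 : ℝ) < M := (inv_pos.2 hδ).trans hM
  obtain ⟨b, hbC, hbres⟩ := hb (G.image (M • ·))
  obtain ⟨x, hxV, rfl⟩ := mem_smul_set.1 hbC
  obtain ⟨y, hy, z, hz, rfl⟩ := hVB hxV
  obtain ⟨t, ht, rfl⟩ := mem_smul_set.1 hz
  refine ⟨(C : ℂ) • y, (C : ℂ) • ((ε / C : ℝ) : ℂ) • t, fun k => ?_, fun k hk => ?_,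
    fun k hk => ?_, fun a ha j hj => ?_⟩
  · rw [map_smul_eq_mul, hnormC]
    exact mul_le_mul_of_nonneg_left (hr k y hy).le hC.le
  · rw [map_smul_eq_mul, map_smul_eq_mul, hnormC, Complex.norm_of_nonneg (by positivity),
      ← mul_assoc, mul_div_cancel₀ _ hC.ne']
    exact mul_le_of_le_one_right hε.le (hU' t ht k hk)
  · rw [← smul_add, map_smul_eq_mul, hnormC]
    exact (mul_le_of_le_one_right hC.le (hU' _ (hVU hxV) k hk)).trans (le_max_left _ _)
  · rw [← smul_add]
    set e := (C : ℂ) • (y + ((ε / C : ℝ) : ℂ) • t)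
    have hMres := hU' _ (hVU (hbres _ (Finset.mem_image_of_mem _ ha))) j hj
    rw [smul_mul_assoc, ← smul_sub, ← Nat.cast_smul_eq_nsmul ℂ, map_smul_eq_mul,
      Complex.norm_natCast] at hMres
    calc q j (a - a * e) ≤ (M : ℝ)⁻¹ := by
          rw [← mul_one (M : ℝ)⁻¹]; exact (le_inv_mul_iff₀ hMpos).2 hMres
      _ ≤ δ := (inv_lt_of_inv_lt₀ hδ hM).le

theorem tendsto_mul_of_approxUnits (hq : WithSeminorms q) {e : Finset A × ℕ → A}
    (he : ∀ F n, ∀ a ∈ F, ∀ j < n, q j (a - a * e (F, n)) ≤ 2⁻¹ ^ n * (1 + q j a)) (a : A) :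
    Tendsto (fun i => a * e i) atTop (𝓝 a) := by
  rw [hq.tendsto_nhds]
  intro j r hr
  have hsmall : ∀ᶠ n : ℕ in atTop, (2⁻¹ : ℝ) ^ n * (1 + q j a) < r := by
    have := (tendsto_pow_atTop_nhds_zero_of_lt_one (r := (2⁻¹ : ℝ)) (by norm_num)
      (by norm_num)).mul_const (1 + q j a)
    rw [zero_mul] at this
    exact this.eventually (gt_mem_nhds hr)
  rw [← prod_atTop_atTop_eq]
  filter_upwards [tendsto_fst.eventually (eventually_ge_atTop {a}),
    tendsto_snd.eventually (hsmall.and (eventually_gt_atTop j))] with ⟨F, n⟩ hF ⟨hn, hjn⟩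
  rw [← map_neg_eq_map, neg_sub]
  exact (he F n a (hF (Finset.mem_singleton_self a)) j hjn).trans_lt hn

end QuasinormableAlgebra

theorem stmt_9_general {A : Type u} [NonUnitalRing A] [Module ℂ A] [UniformSpace A]
    (p : SeminormFamily ℂ A ℕ) (hp : WithSeminorms p)
    (hsub : ∀ (n : ℕ) (a b : A), p n (a * b) ≤ p n a * p n b)
    (hquasinorm : ∀ U ∈ 𝓝 (0 : A), ∃ V ∈ 𝓝 (0 : A), V ⊆ U ∧
      ∀ ε : ℝ, 0 < ε → ∃ B : Set A, IsVonNBounded ℂ B ∧ V ⊆ B + (ε : ℂ) • U)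
    (hlbai : ∀ U ∈ 𝓝 (0 : A), ∃ C : ℝ, 0 < C ∧
      ∀ F : Finset A, ∃ b ∈ (C : ℂ) • U, ∀ a ∈ F, a - a * b ∈ U) :
    ∃ (ι : Type u) (_ : Preorder ι) (_ : IsDirected ι (· ≤ ·)) (_ : Nonempty ι)
      (e : ι → A), IsVonNBounded ℂ (Set.range e) ∧
        ∀ a : A, Tendsto (fun i => a * e i) atTop (𝓝 a) := by
  classical
  set q : ℕ → Seminorm ℂ A := fun n => (Finset.Iic n).sup p
  have hq : WithSeminorms q := hp.partial_sups
  have hmul : ∀ n x y, q n (x * y) ≤ q n x * q n y := fun n =>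
    Seminorm.finset_sup_apply_mul_le _ hsub
  choose C hC hsplit using exists_splitsRightApproxUnits hq
    (fun _ _ h => Finset.sup_mono (Finset.Iic_subset_Iic.2 h)) hquasinorm hlbai
  -- the relative error `2⁻ⁿ / C n` has `θ * C n = 2⁻ⁿ` and, as `C n ≥ 1`, tends to `0`
  obtain ⟨φ, hφ⟩ := exists_seq_of_exists_succ
    (P := fun n φ => RightApproxUnitsBelow q n φ (2⁻¹ ^ n / C n))
    (R := fun n φ φ' => ∀ k < n, φ' k ≤ φ k + 3 * 2⁻¹ ^ n) (rightApproxUnitsBelow_zero q _)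
    fun n φ hφ => hφ.succ hmul (hsplit n) (div_nonneg (by positivity) (by linarith [hC n]))
      (div_mul_cancel₀ _ (by linarith [hC n])).le (by positivity)
      (div_pos (by positivity) (by linarith [hC (n + 1)]))
  choose e hebdd heres using fun i : Finset A × ℕ => (hφ i.2).1 i.1 (2⁻¹ ^ i.2) (by positivity)
  refine ⟨Finset A × ℕ, inferInstance, inferInstance, inferInstance, e, ?_,
    tendsto_mul_of_approxUnits hq fun F n a ha j hj => ?_⟩
  · rw [hq.isVonNBounded_iff_seminorm_bddAbove]
    intro k
    obtain ⟨R, hR⟩ := bddAbove_range_of_le_add_geometric (x := fun n => φ n k) (N := k + 1)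
      (by norm_num) fun n hn => (hφ n).2 k (by omega)
    exact ⟨R, by rintro _ ⟨_, ⟨⟨F, n⟩, rfl⟩, rfl⟩; exact (hebdd (F, n) k).trans (hR ⟨n, rfl⟩)⟩
  · calc q j (a - a * e (F, n)) ≤ 2⁻¹ ^ n + 2⁻¹ ^ n / C n * q j a := heres (F, n) a ha j hj
      _ ≤ 2⁻¹ ^ n * (1 + q j a) := by
        rw [mul_one_add]
        gcongr
        exact div_le_self (by positivity) (hC n)

/-- A quasinormable Fréchet–Arens–Michael algebra with a right locally
bounded approximate identity has a right bounded approximate identity. -/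
theorem stmt_9 {A : Type u} [NonUnitalRing A] [Module ℂ A] [UniformSpace A]
    [IsUniformAddGroup A] [ContinuousSMul ℂ A] [CompleteSpace A] [T2Space A]
    (p : SeminormFamily ℂ A ℕ) (hp : WithSeminorms p)
    (hsub : ∀ (n : ℕ) (a b : A), p n (a * b) ≤ p n a * p n b)
    (hquasinorm : ∀ U ∈ 𝓝 (0 : A), ∃ V ∈ 𝓝 (0 : A), V ⊆ U ∧
      ∀ ε : ℝ, 0 < ε → ∃ B : Set A, IsVonNBounded ℂ B ∧ V ⊆ B + (ε : ℂ) • U)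
    (hlbai : ∀ U ∈ 𝓝 (0 : A), ∃ C : ℝ, 0 < C ∧
      ∀ F : Finset A, ∃ b ∈ (C : ℂ) • U, ∀ a ∈ F, a - a * b ∈ U) :
    ∃ (ι : Type u) (_ : Preorder ι) (_ : IsDirected ι (· ≤ ·)) (_ : Nonempty ι)
      (e : ι → A), IsVonNBounded ℂ (Set.range e) ∧
        ∀ a : A, Tendsto (fun i => a * e i) atTop (𝓝 a) :=
  stmt_9_general p hp hsub hquasinorm hlbai
end

section
/- Let A be a Fréchet–Arens–Michael algebra. The following conditions are equivalent: (1) for every Banach A-bimodule X, every continuous derivation from A into the dual X* is inner; (2) for every complex Banach algebra B such that there exists a continuous algebra homomorphism φ : A → B with dense range, and for every Banach B-bimodule X, every continuous derivation from B into X* is inner (i.e., every such Banach algebra B is amenable in Johnson's sense). -/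
open Filter Topology Bornology Set Pointwise

universe u

/-- A (topological) `C`-bimodule structure on a topological vector space `X`:
jointly continuous left and right `C`-module actions compatible with the
`ℂ`-vector space structures and satisfying `(a·x)·b = a·(x·b)`. -/
structure BimoduleStructure (C : Type u) (X : Type u) [NonUnitalRing C] [Module ℂ C]
    [TopologicalSpace C] [AddCommGroup X] [Module ℂ X] [TopologicalSpace X] where
  l : C → X → X
  r : X → C → X
  l_add_left : ∀ (a b : C) (x : X), l (a + b) x = l a x + l b x
  l_add_right : ∀ (a : C) (x y : X), l a (x + y) = l a x + l a y
  l_smul_left : ∀ (c : ℂ) (a : C) (x : X), l (c • a) x = c • l a x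
  l_smul_right : ∀ (c : ℂ) (a : C) (x : X), l a (c • x) = c • l a x
  l_mul : ∀ (a b : C) (x : X), l (a * b) x = l a (l b x)
  r_add_left : ∀ (x y : X) (a : C), r (x + y) a = r x a + r y a
  r_add_right : ∀ (x : X) (a b : C), r x (a + b) = r x a + r x b
  r_smul_left : ∀ (c : ℂ) (x : X) (a : C), r (c • x) a = c • r x a
  r_smul_right : ∀ (c : ℂ) (x : X) (a : C), r x (c • a) = c • r x a
  r_mul : ∀ (x : X) (a b : C), r x (a * b) = r (r x a) b
  middle_assoc : ∀ (a : C) (x : X) (b : C), r (l a x) b = l a (r x b)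
  cont_l : Continuous fun z : C × X => l z.1 z.2
  cont_r : Continuous fun z : X × C => r z.1 z.2

/-- `C` is "Banach-dual amenable": for every Banach `C`-bimodule `X`, every continuous
derivation from `C` into the dual bimodule `X*` is inner. -/
def AllBanachDualDerivationsInner (C : Type u) [NonUnitalRing C] [Module ℂ C]
    [TopologicalSpace C] : Prop :=
  ∀ (X : Type u) (_ : NormedAddCommGroup X) (_ : NormedSpace ℂ X)
    (M : BimoduleStructure C X) (D : C →ₗ[ℂ] (X →L[ℂ] ℂ)),
    Continuous (fun a : C => D a) →
    (∀ (a b : C) (x : X), D (a * b) x = D b (M.r x a) + D a (M.l b x)) →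
    ∃ f : X →L[ℂ] ℂ, ∀ (a : C) (x : X), D a x = f (M.r x a) - f (M.l a x)

/-! (1) ⇒ (2): a continuous derivation `D : B → X*` pulls back along `φ` to a derivation of `A`,
implemented by some `f`; both sides of `D b = ad f b` are continuous in `b` and agree on the dense
range of `φ`.

(2) ⇒ (1): the two actions of `A` on `X` and a continuous derivation `D : A → X*` are continuous
linear maps into normed spaces, hence all bounded by `C * q` for one finite supremum `q` of the
defining seminorms, and `q` is again submultiplicative. So the bimodule and `D` factor through the
normed algebra `A / ker q`, onto which `A` maps continuously; the derivation induced there is inner,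
and the implementing functional also implements `D`. -/

theorem LinearMap.continuous_of_continuous_uncurry {𝕜 E X Y : Type*} [NontriviallyNormedField 𝕜]
    [AddCommGroup E] [Module 𝕜 E] [TopologicalSpace E] [IsTopologicalAddGroup E]
    [ContinuousConstSMul 𝕜 E] [SeminormedAddCommGroup X] [NormedSpace 𝕜 X]
    [SeminormedAddCommGroup Y] [NormedSpace 𝕜 Y]
    (T : E →ₗ[𝕜] X →L[𝕜] Y) (hT : Continuous fun z : E × X => T z.1 z.2) : Continuous T := by
  have hball : (fun z : E × X => T z.1 z.2) ⁻¹' Metric.ball 0 1 ∈ 𝓝 ((0 : E), (0 : X)) :=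
    hT.continuousAt.preimage_mem_nhds (by simpa using Metric.ball_mem_nhds (0 : Y) one_pos)
  obtain ⟨U, hU, V, hV, hUV⟩ := mem_nhds_prod_iff.mp hball
  obtain ⟨δ, hδ, hδV⟩ := Metric.mem_nhds_iff.mp hV
  obtain ⟨c, hc⟩ := NormedField.exists_one_lt_norm 𝕜
  have hbound : ∀ a ∈ U, ‖T a‖ ≤ ‖c‖ / δ := fun a ha =>
    (T a).opNorm_le_of_shell hδ (by positivity) hc fun x hx hxδ => by
      have h1 : ‖T a x‖ < 1 := by
        simpa using hUV (Set.mk_mem_prod ha (hδV (mem_ball_zero_iff.mpr hxδ)))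
      rw [div_le_iff₀ (by positivity)] at hx
      rw [div_mul_eq_mul_div, le_div_iff₀ hδ]
      nlinarith [norm_nonneg (T a x)]
  have hnorm : Continuous ((normSeminorm 𝕜 (X →L[𝕜] Y)).comp T) :=
    Seminorm.continuous (r := ‖c‖ / δ + 1) <| Filter.mem_of_superset hU fun a ha => by
      simpa using (hbound a ha).trans_lt (lt_add_one _)
  exact (norm_withSeminorms 𝕜 _).continuous_of_continuous_comp T fun _ => hnorm

noncomputable def LinearMap.toContinuous₂ {𝕜 E X Y : Type*} [NontriviallyNormedField 𝕜]
    [AddCommGroup E] [Module 𝕜 E] [TopologicalSpace E] [IsTopologicalAddGroup E]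
    [ContinuousConstSMul 𝕜 E] [SeminormedAddCommGroup X] [NormedSpace 𝕜 X]
    [SeminormedAddCommGroup Y] [NormedSpace 𝕜 Y]
    (T : E →ₗ[𝕜] X →ₗ[𝕜] Y) (hT : Continuous fun z : E × X => T z.1 z.2) :
    E →L[𝕜] X →L[𝕜] Y :=
  let T' : E →ₗ[𝕜] X →L[𝕜] Y :=
    { toFun a := ⟨T a, hT.comp (Continuous.prodMk_right a)⟩
      map_add' a b := by ext; simp
      map_smul' c a := by ext; simp }
  ⟨T', T'.continuous_of_continuous_uncurry hT⟩

namespace BimoduleStructure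

variable {A B X : Type u} [NonUnitalRing A] [Module ℂ A] [TopologicalSpace A]
  [NonUnitalRing B] [Module ℂ B] [TopologicalSpace B]

def comap [AddCommGroup X] [Module ℂ X] [TopologicalSpace X] (M : BimoduleStructure B X)
    (φ : A →ₙₐ[ℂ] B) (hφ : Continuous φ) : BimoduleStructure A X where
  l a x := M.l (φ a) x
  r x a := M.r x (φ a)
  l_add_left a b x := by rw [map_add, M.l_add_left]
  l_add_right a := M.l_add_right (φ a)
  l_smul_left c a x := by rw [map_smul, M.l_smul_left]
  l_smul_right c a := M.l_smul_right c (φ a)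
  l_mul a b x := by rw [map_mul, M.l_mul]
  r_add_left x y a := M.r_add_left x y (φ a)
  r_add_right x a b := by rw [map_add, M.r_add_right]
  r_smul_left c x a := M.r_smul_left c x (φ a)
  r_smul_right c x a := by rw [map_smul, M.r_smul_right]
  r_mul x a b := by rw [map_mul, M.r_mul]
  middle_assoc a x b := M.middle_assoc (φ a) x (φ b)
  cont_l := M.cont_l.comp ((hφ.comp continuous_fst).prodMk continuous_snd)
  cont_r := M.cont_r.comp (continuous_fst.prodMk (hφ.comp continuous_snd))

variable [SeminormedAddCommGroup X] [NormedSpace ℂ X]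

noncomputable def ofCLM (L R : B →L[ℂ] X →L[ℂ] X) (hL : ∀ a b, L (a * b) = (L a).comp (L b))
    (hR : ∀ a b, R (a * b) = (R b).comp (R a)) (hLR : ∀ a b, (R b).comp (L a) = (L a).comp (R b)) :
    BimoduleStructure B X where
  l a x := L a x
  r x a := R a x
  l_add_left a b x := by rw [map_add, add_apply]
  l_add_right a := map_add (L a)
  l_smul_left c a x := by rw [map_smul, smul_apply]
  l_smul_right c a := map_smul (L a) c
  l_mul a b x := by rw [hL, ContinuousLinearMap.comp_apply]
  r_add_left x y a := map_add (R a) x y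
  r_add_right x a b := by rw [map_add, add_apply]
  r_smul_left c x a := map_smul (R a) c x
  r_smul_right c x a := by rw [map_smul, smul_apply]
  r_mul x a b := by rw [hR, ContinuousLinearMap.comp_apply]
  middle_assoc a x b := by rw [← ContinuousLinearMap.comp_apply, hLR, ContinuousLinearMap.comp_apply]
  cont_l := (L.continuous.comp continuous_fst).clm_apply continuous_snd
  cont_r := (R.continuous.comp continuous_snd).clm_apply continuous_fst

variable [IsTopologicalAddGroup A] [ContinuousConstSMul ℂ A] (M : BimoduleStructure A X)

noncomputable def leftAction : A →L[ℂ] X →L[ℂ] X :=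
  (LinearMap.mk₂ ℂ (fun a x => M.l a x) M.l_add_left M.l_smul_left M.l_add_right
    M.l_smul_right).toContinuous₂ M.cont_l

noncomputable def rightAction : A →L[ℂ] X →L[ℂ] X :=
  (LinearMap.mk₂ ℂ (fun a x => M.r x a) (fun a b x => M.r_add_right x a b)
    (fun c a x => M.r_smul_right c x a) (fun a x y => M.r_add_left x y a)
    (fun c a x => M.r_smul_left c x a)).toContinuous₂ (M.cont_r.comp continuous_swap)

end BimoduleStructure

namespace AllBanachDualDerivationsInner

variable {A B : Type u} [NonUnitalRing A] [Module ℂ A] [TopologicalSpace A]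
  [NonUnitalRing B] [Module ℂ B] [TopologicalSpace B]

theorem of_denseRange (hA : AllBanachDualDerivationsInner A) (φ : A →ₙₐ[ℂ] B)
    (hφc : Continuous φ) (hφd : DenseRange φ) : AllBanachDualDerivationsInner B := by
  intro X _ _ M D hDc hder
  obtain ⟨f, hf⟩ := hA X _ _ (M.comap φ hφc) (D.comp (φ : A →ₗ[ℂ] B)) (hDc.comp hφc)
    fun a b x => by simpa [BimoduleStructure.comap] using hder (φ a) (φ b) x
  refine ⟨f, fun b x => hφd.induction_on b ?_ fun a => hf a x⟩
  exact isClosed_eq ((ContinuousLinearMap.apply ℂ ℂ x).continuous.comp hDc)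
    ((f.continuous.comp (M.cont_r.comp (continuous_const.prodMk continuous_id))).sub
      (f.continuous.comp (M.cont_l.comp (continuous_id.prodMk continuous_const))))

theorem exists_eq_inner_of_surjective (hB : AllBanachDualDerivationsInner B)
    (φ : A →ₙₐ[ℂ] B) (hφ : Function.Surjective φ) {X : Type u} [NormedAddCommGroup X]
    [NormedSpace ℂ X] (M : BimoduleStructure A X) (D : A →ₗ[ℂ] X →L[ℂ] ℂ)
    (hder : ∀ (a b : A) (x : X), D (a * b) x = D b (M.r x a) + D a (M.l b x))
    (L R : B →L[ℂ] X →L[ℂ] X) (Δ : B →L[ℂ] X →L[ℂ] ℂ) (hL : ∀ a x, L (φ a) x = M.l a x)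
    (hR : ∀ a x, R (φ a) x = M.r x a) (hΔ : ∀ a, Δ (φ a) = D a) :
    ∃ f : X →L[ℂ] ℂ, ∀ (a : A) (x : X), D a x = f (M.r x a) - f (M.l a x) := by
  have hLmul : ∀ b b', L (b * b') = (L b).comp (L b') := by
    intro b b'
    obtain ⟨a, rfl⟩ := hφ b
    obtain ⟨a', rfl⟩ := hφ b'
    ext x
    simp [← map_mul, hL, M.l_mul]
  have hRmul : ∀ b b', R (b * b') = (R b').comp (R b) := by
    intro b b'
    obtain ⟨a, rfl⟩ := hφ b
    obtain ⟨a', rfl⟩ := hφ b'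
    ext x
    simp [← map_mul, hR, M.r_mul]
  have hLR : ∀ b b', (R b').comp (L b) = (L b).comp (R b') := by
    intro b b'
    obtain ⟨a, rfl⟩ := hφ b
    obtain ⟨a', rfl⟩ := hφ b'
    ext x
    simp [hL, hR, M.middle_assoc]
  obtain ⟨f, hf⟩ := hB X _ _ (.ofCLM L R hLmul hRmul hLR) Δ Δ.continuous <| by
    intro b b' x
    obtain ⟨a, rfl⟩ := hφ b
    obtain ⟨a', rfl⟩ := hφ b'
    simpa [BimoduleStructure.ofCLM, ← map_mul, hL, hR, hΔ] using hder a a' x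
  exact ⟨f, fun a x => by simpa [BimoduleStructure.ofCLM, hL, hR, hΔ] using hf (φ a) x⟩

end AllBanachDualDerivationsInner

theorem Seminorm.finset_sup_apply_mul_le_s10 {ι 𝕜 A : Type*} [NormedField 𝕜] [NonUnitalRing A]
    [Module 𝕜 A] {p : ι → Seminorm 𝕜 A} (hp : ∀ i a b, p i (a * b) ≤ p i a * p i b)
    (s : Finset ι) (a b : A) : s.sup p (a * b) ≤ s.sup p a * s.sup p b :=
  Seminorm.finset_sup_apply_le (by positivity) fun _ hi => (hp _ a b).trans <|
    mul_le_mul (le_finset_sup_apply hi) (le_finset_sup_apply hi) (apply_nonneg _ _)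
      (apply_nonneg _ _)

def WithSeminorm {A : Type u} [NonUnitalRing A] [Module ℂ A] (_ : Seminorm ℂ A) : Type u := A

namespace WithSeminorm

variable {A : Type u} [NonUnitalRing A] [Module ℂ A] (q : Seminorm ℂ A)
  [hq : Fact (∀ a b, q (a * b) ≤ q a * q b)]

instance : NonUnitalRing (WithSeminorm q) := inferInstanceAs (NonUnitalRing A)

instance : Module ℂ (WithSeminorm q) := inferInstanceAs (Module ℂ A)

noncomputable instance : NonUnitalSeminormedRing (WithSeminorm q) :=
  { AddGroupSeminorm.toSeminormedAddCommGroup (E := WithSeminorm q) q.toAddGroupSeminorm,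
    (inferInstance : NonUnitalRing (WithSeminorm q)) with norm_mul_le := hq.out }

instance : NormedSpace ℂ (WithSeminorm q) := ⟨fun c a => (map_smul_eq_mul q c a).le⟩

noncomputable def toQuotient : A →ₙₐ[ℂ] SeparationQuotient (WithSeminorm q) where
  toFun a := SeparationQuotient.mk (a : WithSeminorm q)
  map_zero' := rfl
  map_add' _ _ := rfl
  map_smul' _ _ := rfl
  map_mul' _ _ := rfl

@[simp] theorem norm_toQuotient (a : A) : ‖toQuotient q a‖ = q a := rfl

theorem toQuotient_surjective : Function.Surjective (toQuotient q) :=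
  fun b => SeparationQuotient.surjective_mk b

theorem continuous_toQuotient [TopologicalSpace A] [IsTopologicalAddGroup A]
    (hqc : Continuous q) : Continuous (toQuotient q) := by
  refine continuous_of_continuousAt_zero (toQuotient q) ?_
  rw [ContinuousAt, map_zero, tendsto_zero_iff_norm_tendsto_zero]
  simpa using hqc.tendsto' 0 0 (map_zero q)

noncomputable def liftCLM {F : Type*} [NormedAddCommGroup F] [NormedSpace ℂ F] (T : A →ₗ[ℂ] F)
    (C : ℝ) (hT : ∀ a, ‖T a‖ ≤ C * q a) : SeparationQuotient (WithSeminorm q) →L[ℂ] F :=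
  let T' : WithSeminorm q →L[ℂ] F := LinearMap.mkContinuous T C hT
  SeparationQuotient.liftCLM T' fun _ _ h => (h.map T'.continuous).eq

end WithSeminorm

theorem WithSeminorms.exists_norm_le_finset_sup {𝕜 E F ι : Type*} [NontriviallyNormedField 𝕜]
    [AddCommGroup E] [Module 𝕜 E] [TopologicalSpace E] [SeminormedAddCommGroup F]
    [NormedSpace 𝕜 F] {p : SeminormFamily 𝕜 E ι} (hp : WithSeminorms p) (T : E →L[𝕜] F) :
    ∃ (s : Finset ι) (C : ℝ), ∀ a, ‖T a‖ ≤ C * s.sup p a := by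
  obtain ⟨s, C, -, hC⟩ := Seminorm.bound_of_continuous hp ((normSeminorm 𝕜 F).comp T.toLinearMap)
    (continuous_norm.comp T.continuous)
  exact ⟨s, C, fun a => hC a⟩

theorem AllBanachDualDerivationsInner.of_forall_denseRange {A : Type u} {ι : Type*}
    [NonUnitalRing A] [Module ℂ A] [TopologicalSpace A] {p : SeminormFamily ℂ A ι} (hp : WithSeminorms p)
    (hsub : ∀ i a b, p i (a * b) ≤ p i a * p i b)
    (H : ∀ (B : Type u) (_ : NonUnitalNormedRing B) (_ : NormedSpace ℂ B) (φ : A →ₙₐ[ℂ] B),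
      Continuous φ → DenseRange φ → AllBanachDualDerivationsInner B) :
    AllBanachDualDerivationsInner A := by
  have := hp.topologicalAddGroup
  have := hp.continuousSMul
  intro X _ _ M D hDc hder
  obtain ⟨s, C, hC⟩ := hp.exists_norm_le_finset_sup
    ((M.leftAction.prod M.rightAction).prod ⟨D, hDc⟩)
  set q := s.sup p
  have : Fact (∀ a b, q (a * b) ≤ q a * q b) := ⟨Seminorm.finset_sup_apply_mul_le_s10 hsub s⟩
  have hqc : Continuous q := Seminorm.continuous_finsetSup fun i _ => hp.continuous_seminorm i
  have hsurj := WithSeminorm.toQuotient_surjective q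
  refine (H _ inferInstance inferInstance _ (WithSeminorm.continuous_toQuotient q hqc)
    hsurj.denseRange).exists_eq_inner_of_surjective _ hsurj M D hder
    (WithSeminorm.liftCLM q M.leftAction C fun a => ?_)
    (WithSeminorm.liftCLM q M.rightAction C fun a => ?_)
    (WithSeminorm.liftCLM q D C fun a => ?_) (fun _ _ => rfl) (fun _ _ => rfl) (fun _ => rfl)
  · exact (norm_fst_le _).trans ((norm_fst_le _).trans (hC a))
  · exact (norm_snd_le _).trans ((norm_fst_le _).trans (hC a))
  · exact (norm_snd_le _).trans (hC a)

theorem stmt_10_general {A : Type u} [NonUnitalRing A] [Module ℂ A] [UniformSpace A]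
    (p : SeminormFamily ℂ A ℕ) (hp : WithSeminorms p)
    (hsub : ∀ (n : ℕ) (a b : A), p n (a * b) ≤ p n a * p n b) :
    AllBanachDualDerivationsInner A ↔
    (∀ (B : Type u) (_ : NonUnitalNormedRing B) (_ : NormedSpace ℂ B)
      (φ : A →ₙₐ[ℂ] B), Continuous φ → DenseRange φ →
      AllBanachDualDerivationsInner B) :=
  ⟨fun hA _ _ _ φ hφc hφd => hA.of_denseRange φ hφc hφd,
    AllBanachDualDerivationsInner.of_forall_denseRange hp hsub⟩

/-- For a Fréchet–Arens–Michael algebra `A`, every continuous derivation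
of `A` into the dual of a Banach `A`-bimodule is inner iff every Banach algebra `B`
admitting a continuous homomorphism `A → B` with dense range is amenable in Johnson's
sense. -/
theorem stmt_10 {A : Type u} [NonUnitalRing A] [Module ℂ A] [UniformSpace A]
    [IsUniformAddGroup A] [ContinuousSMul ℂ A] [CompleteSpace A] [T2Space A]
    (p : SeminormFamily ℂ A ℕ) (hp : WithSeminorms p)
    (hsub : ∀ (n : ℕ) (a b : A), p n (a * b) ≤ p n a * p n b) :
    AllBanachDualDerivationsInner A ↔
    (∀ (B : Type u) (_ : NonUnitalNormedRing B) (_ : NormedSpace ℂ B)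
      (φ : A →ₙₐ[ℂ] B), Continuous φ → DenseRange φ →
      AllBanachDualDerivationsInner B) :=
  stmt_10_general p hp hsub
end

section
/- Let p : ℕ → ℝ be a sequence with p_i ≥ 1 for all i, and let A_p = { a : ℕ → ℂ : ‖a‖_p := Σ_i |a_i|·p_i < ∞ }, a Banach space with norm ‖·‖_p. Define a product on A_p by (a*b)_k = a_k·b_k + a_k·(Σ_{j>k} b_j) + b_k·(Σ_{j>k} a_j). Then: all the series involved converge absolutely and a*b ∈ A_p for a, b ∈ A_p; the product is ℂ-bilinear, commutative, and associative; e_i * e_j = e_{min(i,j)} for all i, j, where e_i denotes the sequence which is 1 at position i and 0 elsewhere; and ‖a*b‖_p ≤ ‖a‖_p·‖b‖_p for all a, b ∈ A_p. In particular, (A_p, *, ‖·‖_p) is a commutative Banach algebra. -/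
open Filter Topology

/-- The sum of the tail `Σ_{j > k} a j` of a complex sequence. -/
noncomputable def tailSum (a : ℕ → ℂ) (k : ℕ) : ℂ :=
  ∑' j : ℕ, if k < j then a j else 0

/-- The product `(a*b)_k = a_k b_k + a_k (Σ_{j>k} b_j) + b_k (Σ_{j>k} a_j)`,
the unique continuous bilinear extension of `e_i * e_j = e_{min i j}`. -/
noncomputable def kmul (a b : ℕ → ℂ) : ℕ → ℂ :=
  fun k => a k * b k + a k * tailSum b k + b k * tailSum a k

/-- Membership in the weighted `ℓ¹`-space `A_p`. -/
def memAp (p : ℕ → ℝ) (a : ℕ → ℂ) : Prop :=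
  Summable fun i => ‖a i‖ * p i

/-- The norm `‖a‖_p = Σ_i |a_i| p_i` of `A_p`. -/
noncomputable def pnorm (p : ℕ → ℝ) (a : ℕ → ℂ) : ℝ :=
  ∑' i, ‖a i‖ * p i

/-- The `i`-th unit coordinate sequence. -/
def unitSeq (i : ℕ) : ℕ → ℂ := fun k => if k = i then 1 else 0

/-!
Grouping the terms `f i * g j` of the Cauchy product `(Σ f) (Σ g)` according to `m = min i j`
produces exactly the `m`-th term `f m g m + f m Σ_{j>m} g j + g m Σ_{i>m} f i` of the product
sequence, so the product sequence of two absolutely summable sequences sums to the product of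
their sums. Applied to the truncations `j ↦ [k < j] a j` this makes the tail sums
multiplicative, `tailSum (a*b) k = tailSum a k * tailSum b k`, from which associativity is a
ring identity; applied to the weighted absolute values `|a i| p i`, and using `p ≥ 1`, it bounds
`‖a*b‖_p` by `‖a‖_p ‖b‖_p`.
-/

theorem Summable.ite_zero {ι E : Type*} [AddCommGroup E] [UniformSpace E] [IsUniformAddGroup E]
    [CompleteSpace E] {f : ι → E} (hf : Summable f) (P : ι → Prop) [DecidablePred P] :
    Summable fun i => if P i then f i else 0 :=
  hf.summable_of_eq_zero_or_self fun i => by split_ifs <;> simp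

theorem tsum_ite_le_eq_add_tsum_ite_lt {E : Type*} [AddCommGroup E] [UniformSpace E]
    [IsUniformAddGroup E] [CompleteSpace E] [T2Space E] {g : ℕ → E} (hg : Summable g) (m : ℕ) :
    ∑' j, (if m ≤ j then g j else 0) = g m + ∑' j, if m < j then g j else 0 := by
  have hsplit : (fun j => if m ≤ j then g j else 0)
      = fun j => (if j = m then g m else 0) + (if m < j then g j else 0) := by
    funext j
    rcases lt_trichotomy j m with h | rfl | h
    · simp [h.ne, h.not_ge, h.not_gt]
    · simp
    · simp [h.ne', h.le, h]
  rw [hsplit, (hasSum_ite_eq m (g m)).summable.tsum_add (hg.ite_zero _), tsum_ite_eq]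

theorem hasSum_mul_tsum_ite {R α β : Type*} [NormedRing R] [CompleteSpace R]
    (r : α → β → Prop) [∀ i, DecidablePred (r i)] {f : α → R} {g : β → R}
    (hf : Summable fun i => ‖f i‖) (hg : Summable fun j => ‖g j‖) :
    HasSum (fun i => f i * ∑' j, if r i j then g j else 0)
      (∑' z : α × β, if r z.1 z.2 then f z.1 * g z.2 else 0) := by
  refine ((summable_mul_of_summable_norm hf hg).ite_zero _).hasSum.prod_fiberwise fun i => ?_
  simpa only [mul_ite, mul_zero] using ((hg.of_norm.ite_zero (r i)).hasSum.mul_left (f i))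

section CauchyProduct

variable {R : Type*} [NormedCommRing R] [CompleteSpace R] {f g : ℕ → R}

theorem hasSum_tsum_mul_tsum_of_min_grouping (hf : Summable fun i => ‖f i‖)
    (hg : Summable fun j => ‖g j‖) :
    HasSum (fun m => f m * g m + f m * (∑' j, if m < j then g j else 0)
      + g m * (∑' i, if m < i then f i else 0)) ((∑' i, f i) * ∑' j, g j) := by
  have hprod := summable_mul_of_summable_norm hf hg
  have hle := hasSum_mul_tsum_ite (· ≤ ·) hf hg
  have hlt := hasSum_mul_tsum_ite (· < ·) hg hf
  simp only [tsum_ite_le_eq_add_tsum_ite_lt hg.of_norm, mul_add] at hle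
  rw [← (Equiv.prodComm ℕ ℕ).tsum_eq] at hlt
  simp only [Equiv.prodComm_apply, Prod.fst_swap, Prod.snd_swap, mul_comm (g _) (f _)] at hlt
  convert hle.add hlt using 1
  have hsplit : ∀ z : ℕ × ℕ, f z.1 * g z.2
      = (if z.1 ≤ z.2 then f z.1 * g z.2 else 0) + (if z.2 < z.1 then f z.1 * g z.2 else 0) :=
    fun z => by split_ifs <;> first | omega | simp
  rw [tsum_mul_tsum_of_summable_norm hf hg, tsum_congr hsplit,
    (hprod.ite_zero _).tsum_add (hprod.ite_zero _)]

end CauchyProduct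

section Algebra

variable {a b c : ℕ → ℂ}

theorem tailSum_add (ha : Summable a) (hb : Summable b) (k : ℕ) :
    tailSum (a + b) k = tailSum a k + tailSum b k := by
  rw [tailSum, tailSum, tailSum, ← (ha.ite_zero _).tsum_add (hb.ite_zero _)]
  exact tsum_congr fun j => by split_ifs <;> simp

theorem tailSum_smul (c : ℂ) (a : ℕ → ℂ) (k : ℕ) : tailSum (c • a) k = c * tailSum a k := by
  rw [tailSum, tailSum, ← tsum_mul_left]
  exact tsum_congr fun j => by split_ifs <;> simp

theorem kmul_comm (a b : ℕ → ℂ) : kmul a b = kmul b a := by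
  funext k
  simp only [kmul]
  ring

theorem add_kmul {a a' : ℕ → ℂ} (ha : Summable a) (ha' : Summable a') (b : ℕ → ℂ) :
    kmul (a + a') b = kmul a b + kmul a' b := by
  funext k
  simp only [kmul, tailSum_add ha ha', Pi.add_apply]
  ring

theorem kmul_add (a : ℕ → ℂ) {b b' : ℕ → ℂ} (hb : Summable b) (hb' : Summable b') :
    kmul a (b + b') = kmul a b + kmul a b' := by
  rw [kmul_comm, add_kmul hb hb', kmul_comm b, kmul_comm b']

theorem smul_kmul (c : ℂ) (a b : ℕ → ℂ) : kmul (c • a) b = c • kmul a b := by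
  funext k
  simp only [kmul, tailSum_smul, Pi.smul_apply, smul_eq_mul]
  ring

theorem kmul_smul (c : ℂ) (a b : ℕ → ℂ) : kmul a (c • b) = c • kmul a b := by
  rw [kmul_comm, smul_kmul, kmul_comm]

theorem tsum_kmul (ha : Summable fun i => ‖a i‖) (hb : Summable fun i => ‖b i‖) :
    ∑' k, kmul a b k = (∑' i, a i) * ∑' j, b j :=
  (hasSum_tsum_mul_tsum_of_min_grouping ha hb).tsum_eq

theorem kmul_ite_lt (a b : ℕ → ℂ) (k m : ℕ) :
    kmul (fun j => if k < j then a j else 0) (fun j => if k < j then b j else 0) m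
      = if k < m then kmul a b m else 0 := by
  by_cases hkm : k < m
  · have htail : ∀ d : ℕ → ℂ, tailSum (fun j => if k < j then d j else 0) m = tailSum d m :=
      fun d => tsum_congr fun j => by dsimp only; split_ifs <;> first | rfl | omega
    simp only [kmul, htail, if_pos hkm]
  · simp [kmul, hkm]

theorem tailSum_kmul (ha : Summable fun i => ‖a i‖) (hb : Summable fun i => ‖b i‖) (k : ℕ) :
    tailSum (kmul a b) k = tailSum a k * tailSum b k := by
  have htrunc : ∀ d : ℕ → ℂ, (Summable fun i => ‖d i‖) →
      Summable fun j => ‖if k < j then d j else 0‖ :=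
    fun d hd => hd.of_nonneg_of_le (fun _ => norm_nonneg _) fun j => by split_ifs <;> simp
  simp only [tailSum]
  rw [← tsum_kmul (htrunc a ha) (htrunc b hb)]
  exact tsum_congr fun m => (kmul_ite_lt a b k m).symm

theorem kmul_assoc (ha : Summable fun i => ‖a i‖) (hb : Summable fun i => ‖b i‖)
    (hc : Summable fun i => ‖c i‖) : kmul (kmul a b) c = kmul a (kmul b c) := by
  funext k
  have hab := tailSum_kmul ha hb k
  have hbc := tailSum_kmul hb hc k
  simp only [kmul] at hab hbc ⊢
  rw [hab, hbc]
  ring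

theorem tailSum_unitSeq (i k : ℕ) : tailSum (unitSeq i) k = if k < i then 1 else 0 := by
  rw [tailSum, ← tsum_ite_eq i fun j => if k < j then (1 : ℂ) else 0]
  exact tsum_congr fun j => by by_cases h : j = i <;> simp [unitSeq, h]

theorem kmul_unitSeq (i j : ℕ) : kmul (unitSeq i) (unitSeq j) = unitSeq (min i j) := by
  funext k
  simp only [kmul, tailSum_unitSeq, unitSeq]
  split_ifs <;> first | omega | norm_num

end Algebra

section Norm

variable {p : ℕ → ℝ} {a b : ℕ → ℂ}

theorem memAp.summable_norm (hp : ∀ i, 1 ≤ p i) (ha : memAp p a) : Summable fun i => ‖a i‖ :=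
  ha.of_nonneg_of_le (fun _ => norm_nonneg _) fun i => le_mul_of_one_le_right (norm_nonneg _) (hp i)

theorem norm_tailSum_le (hp : ∀ i, 1 ≤ p i) (ha : memAp p a) (k : ℕ) :
    ‖tailSum a k‖ ≤ ∑' j, if k < j then ‖a j‖ * p j else 0 :=
  tsum_of_norm_bounded (ha.ite_zero _).hasSum fun j => by
    split_ifs
    · exact le_mul_of_one_le_right (norm_nonneg _) (hp j)
    · simp

theorem norm_kmul_mul_le (hp : ∀ i, 1 ≤ p i) (ha : memAp p a) (hb : memAp p b) (k : ℕ) :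
    ‖kmul a b k‖ * p k ≤ ‖a k‖ * p k * (‖b k‖ * p k)
      + ‖a k‖ * p k * (∑' j, if k < j then ‖b j‖ * p j else 0)
      + ‖b k‖ * p k * (∑' j, if k < j then ‖a j‖ * p j else 0) := by
  have hpk : 0 ≤ p k := zero_le_one.trans (hp k)
  have hdiag : ‖a k‖ * ‖b k‖ * p k ≤ ‖a k‖ * p k * (‖b k‖ * p k) := by
    rw [show ‖a k‖ * p k * (‖b k‖ * p k) = ‖a k‖ * ‖b k‖ * p k * p k by ring]
    exact le_mul_of_one_le_right (by positivity) (hp k)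
  calc ‖kmul a b k‖ * p k
      ≤ (‖a k‖ * ‖b k‖ + ‖a k‖ * ‖tailSum b k‖ + ‖b k‖ * ‖tailSum a k‖) * p k := by
        gcongr
        simp only [kmul, ← norm_mul]
        exact norm_add₃_le
    _ = ‖a k‖ * ‖b k‖ * p k + ‖a k‖ * p k * ‖tailSum b k‖ + ‖b k‖ * p k * ‖tailSum a k‖ := by
        ring
    _ ≤ _ := by
        gcongr ?_ + _ * ?_ + _ * ?_
        exacts [norm_tailSum_le hp hb k, norm_tailSum_le hp ha k]

theorem hasSum_pnorm_mul_pnorm (ha : memAp p a) (hb : memAp p b) :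
    HasSum (fun k => ‖a k‖ * p k * (‖b k‖ * p k)
      + ‖a k‖ * p k * (∑' j, if k < j then ‖b j‖ * p j else 0)
      + ‖b k‖ * p k * (∑' j, if k < j then ‖a j‖ * p j else 0)) (pnorm p a * pnorm p b) := by
  have habs : ∀ {d : ℕ → ℂ}, memAp p d → Summable fun i => ‖‖d i‖ * p i‖ :=
    fun hd => by simpa only [Real.norm_eq_abs] using hd.abs
  exact hasSum_tsum_mul_tsum_of_min_grouping (habs ha) (habs hb)

theorem memAp_kmul (hp : ∀ i, 1 ≤ p i) (ha : memAp p a) (hb : memAp p b) : memAp p (kmul a b) :=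
  (hasSum_pnorm_mul_pnorm ha hb).summable.of_nonneg_of_le
    (fun k => mul_nonneg (norm_nonneg _) (zero_le_one.trans (hp k))) (norm_kmul_mul_le hp ha hb)

theorem pnorm_kmul_le (hp : ∀ i, 1 ≤ p i) (ha : memAp p a) (hb : memAp p b) :
    pnorm p (kmul a b) ≤ pnorm p a * pnorm p b :=
  hasSum_le (norm_kmul_mul_le hp ha hb) (memAp_kmul hp ha hb).hasSum (hasSum_pnorm_mul_pnorm ha hb)

end Norm

/-- For a weight `p` with `p_i ≥ 1`, the weighted `ℓ¹`-space `A_p` with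
the product `(a*b)_k = a_k b_k + a_k (Σ_{j>k} b_j) + b_k (Σ_{j>k} a_j)` is a commutative
Banach algebra: all the series involved converge absolutely, `A_p` is closed under the
product, the product is `ℂ`-bilinear, commutative and associative, `e_i * e_j =
e_{min(i,j)}`, and `‖a*b‖_p ≤ ‖a‖_p ‖b‖_p`. -/
theorem stmt_13 (p : ℕ → ℝ) (hp : ∀ i, 1 ≤ p i) :
    -- absolute convergence of all series involved
    (∀ a : ℕ → ℂ, memAp p a → Summable fun i => ‖a i‖) ∧
    (∀ a : ℕ → ℂ, memAp p a → ∀ k : ℕ, Summable fun j => if k < j then ‖a j‖ else 0) ∧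
    -- `A_p` is closed under the product
    (∀ a b : ℕ → ℂ, memAp p a → memAp p b → memAp p (kmul a b)) ∧
    -- `ℂ`-bilinearity
    (∀ a a' b : ℕ → ℂ, memAp p a → memAp p a' → memAp p b →
      kmul (a + a') b = kmul a b + kmul a' b) ∧
    (∀ (c : ℂ) (a b : ℕ → ℂ), memAp p a → memAp p b → kmul (c • a) b = c • kmul a b) ∧
    (∀ a b b' : ℕ → ℂ, memAp p a → memAp p b → memAp p b' →
      kmul a (b + b') = kmul a b + kmul a b') ∧
    (∀ (c : ℂ) (a b : ℕ → ℂ), memAp p a → memAp p b → kmul a (c • b) = c • kmul a b) ∧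
    -- commutativity and associativity
    (∀ a b : ℕ → ℂ, kmul a b = kmul b a) ∧
    (∀ a b c : ℕ → ℂ, memAp p a → memAp p b → memAp p c →
      kmul (kmul a b) c = kmul a (kmul b c)) ∧
    -- the product of unit coordinate sequences
    (∀ i j : ℕ, kmul (unitSeq i) (unitSeq j) = unitSeq (min i j)) ∧
    -- submultiplicativity of the norm
    (∀ a b : ℕ → ℂ, memAp p a → memAp p b → pnorm p (kmul a b) ≤ pnorm p a * pnorm p b) := by
  have hnorm : ∀ a : ℕ → ℂ, memAp p a → Summable fun i => ‖a i‖ :=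
    fun a ha => ha.summable_norm hp
  refine ⟨hnorm, fun a ha k => (hnorm a ha).ite_zero _, fun a b ha hb => memAp_kmul hp ha hb,
    fun a a' b ha ha' _ => add_kmul (hnorm a ha).of_norm (hnorm a' ha').of_norm b,
    fun c a b _ _ => smul_kmul c a b,
    fun a b b' _ hb hb' => kmul_add a (hnorm b hb).of_norm (hnorm b' hb').of_norm,
    fun c a b _ _ => kmul_smul c a b, kmul_comm,
    fun a b c ha hb hc => kmul_assoc (hnorm a ha) (hnorm b hb) (hnorm c hc), kmul_unitSeq,
    fun a b ha hb => pnorm_kmul_le hp ha hb⟩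
end

section
/- Let P be a nonempty family of sequences p : ℕ → ℝ with p_i ≥ 1 for all i and all p ∈ P, and let λ(P) = { a : ℕ → ℂ : Σ_i |a_i|·p_i < ∞ for every p ∈ P }, equipped with the product (a*b)_k = a_k·b_k + a_k·(Σ_{j>k} b_j) + b_k·(Σ_{j>k} a_j) (the unique continuous extension of e_i·e_j = e_{min(i,j)}). Then the algebra (λ(P), *) has no identity element: there is no u ∈ λ(P) with u*a = a for all a ∈ λ(P). -/
open Filter Topology

/-- Membership in the Köthe sequence space `λ(P)`. -/
def memKothe (P : Set (ℕ → ℝ)) (a : ℕ → ℂ) : Prop :=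
  ∀ p ∈ P, Summable fun i => ‖a i‖ * p i

/-- The standard basis sequence. -/
noncomputable def eSeq (k : ℕ) : ℕ → ℂ := fun i => if i = k then 1 else 0

lemma eSeq_mem (P : Set (ℕ → ℝ)) (k : ℕ) : memKothe P (eSeq k) := by
  intro p _
  apply summable_of_ne_finset_zero (s := {k})
  intro i hi
  simp only [Finset.mem_singleton] at hi
  simp [eSeq, hi]

lemma tailSum_eSeq (k j : ℕ) : tailSum (eSeq k) j = if j < k then 1 else 0 := by
  unfold tailSum eSeq
  rw [tsum_eq_single k]
  · simp
  · intro i hi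
    simp [hi]

/-- For a nonempty family `P` of weights `p` with `p_i ≥ 1`, the Köthe
algebra `(λ(P), *)` has no identity element. -/
theorem stmt_14 (P : Set (ℕ → ℝ)) (hP : P.Nonempty) (hp : ∀ p ∈ P, ∀ i, 1 ≤ p i) :
    ¬ ∃ u : ℕ → ℂ, memKothe P u ∧ ∀ a : ℕ → ℂ, memKothe P a → kmul u a = a := by
  rintro ⟨u, _, hu⟩
  have hzero : ∀ j, u j = 0 := by
    intro j
    have h := congrFun (hu (eSeq (j + 1)) (eSeq_mem P (j + 1))) j
    simp [kmul, eSeq, tailSum_eSeq, Nat.lt_succ_self] at h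
    exact h
  have h0 := congrFun (hu (eSeq 0) (eSeq_mem P 0)) 0
  have htail : tailSum u 0 = 0 := by
    unfold tailSum
    simp [hzero]
  simp [kmul, eSeq, tailSum_eSeq, hzero, htail] at h0
end
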